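/- Let 1 < p < ∞ and let 𝒳 be a Banach space. Then 𝒳 has RMF_p with respect to the filtration of dyadic intervals on [0,1) if and only if there exist a constant C and a function v, defined on pairs (𝒯,T) with 𝒯 a finite subset of 𝒳 and T ∈ 𝒳, such that: (1) v(𝒯,T) ≥ 𝓡(𝒯)^p − C‖T‖^p; (2) v({T},T) ≤ 0; (3) v(𝒯 ∪ {T},T) = v(𝒯,T); and (4) T ↦ v(𝒯,T) is midpoint concave, i.e. v(𝒯,(T_1+T_2)/2) ≥ (v(𝒯,T_1)+v(𝒯,T_2))/2, for all finite 𝒯 ⊂ 𝒳 and all T, T_1, T_2 ∈ 𝒳. -/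

import Mathlib

open MeasureTheory Finset Set
open scoped ENNReal NNReal

noncomputable section

namespace RMF

open scoped Classical

universe u

/-- The average `2^{-N} ∑_{ε ∈ {-1,1}^N} ‖∑ⱼ εⱼ • xⱼ‖²` over all choices of signs. -/
def radAvg {E : Type*} [NormedAddCommGroup E] [NormedSpace ℝ E] {N : ℕ}
    (x : Fin N → E) : ℝ :=
  (2 ^ N : ℝ)⁻¹ * ∑ ε : Fin N → Bool, ‖∑ j, (if ε j then (1 : ℝ) else -1) • x j‖ ^ 2

/-- `E` has type `p`. -/
def HasType (E : Type*) [NormedAddCommGroup E] [NormedSpace ℝ E] (p : ℝ) : Prop :=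
  ∃ C : ℝ, 0 ≤ C ∧ ∀ (N : ℕ) (x : Fin N → E),
    Real.sqrt (radAvg x) ≤ C * (∑ j, ‖x j‖ ^ p) ^ (1 / p)

/-- `E` has cotype `q`. -/
def HasCotype (E : Type*) [NormedAddCommGroup E] [NormedSpace ℝ E] (q : ℝ) : Prop :=
  ∃ C : ℝ, 0 ≤ C ∧ ∀ (N : ℕ) (x : Fin N → E),
    (∑ j, ‖x j‖ ^ q) ^ (1 / q) ≤ C * Real.sqrt (radAvg x)

/-- `C` is an R-bound for the set `S` of vectors (scalar test sequences). -/
def IsRBound {𝒳 : Type*} [NormedAddCommGroup 𝒳] [NormedSpace ℝ 𝒳]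
    (S : Set 𝒳) (C : ℝ) : Prop :=
  0 ≤ C ∧ ∀ (N : ℕ) (y : Fin N → 𝒳) (l : Fin N → ℝ), (∀ j, y j ∈ S) →
    radAvg (fun j => l j • y j) ≤ C ^ 2 * radAvg l

/-- The R-bound `𝓡(S) ∈ [0,∞]` of a set of vectors. -/
def Rbound {𝒳 : Type*} [NormedAddCommGroup 𝒳] [NormedSpace ℝ 𝒳] (S : Set 𝒳) : ℝ≥0∞ :=
  sInf {c : ℝ≥0∞ | ∃ r : ℝ, IsRBound S r ∧ c = ENNReal.ofReal r}

/-- `C` is an R-bound for the family `S` of operators. -/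
def IsRBoundOp {H E : Type*} [NormedAddCommGroup H] [NormedSpace ℝ H]
    [NormedAddCommGroup E] [NormedSpace ℝ E] (S : Set (H →L[ℝ] E)) (C : ℝ) : Prop :=
  0 ≤ C ∧ ∀ (N : ℕ) (T : Fin N → H →L[ℝ] E) (x : Fin N → H), (∀ j, T j ∈ S) →
    radAvg (fun j => T j (x j)) ≤ C ^ 2 * radAvg x

/-- The R-bound `𝓡(S) ∈ [0,∞]` of a family of operators. -/
def RboundOp {H E : Type*} [NormedAddCommGroup H] [NormedSpace ℝ H]
    [NormedAddCommGroup E] [NormedSpace ℝ E] (S : Set (H →L[ℝ] E)) : ℝ≥0∞ :=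
  sInf {c : ℝ≥0∞ | ∃ r : ℝ, IsRBoundOp S r ∧ c = ENNReal.ofReal r}

/-- The average of `f` over the standard dyadic interval of generation `j` containing `ξ`. -/
def dyAvg {𝒳 : Type*} [NormedAddCommGroup 𝒳] [NormedSpace ℝ 𝒳] (f : ℝ → 𝒳) (j : ℤ)
    (ξ : ℝ) : 𝒳 :=
  ((2 : ℝ) ^ j) • ∫ t in Set.Ico ((⌊(2 : ℝ) ^ j * ξ⌋ : ℝ) / (2 : ℝ) ^ j)
      (((⌊(2 : ℝ) ^ j * ξ⌋ : ℝ) + 1) / (2 : ℝ) ^ j), f t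

/-- The standard dyadic cube of generation `j` containing `ξ` in `ℝⁿ`. -/
def dyCube (n : ℕ) (j : ℤ) (ξ : Fin n → ℝ) : Set (Fin n → ℝ) :=
  {η | ∀ i, ⌊(2 : ℝ) ^ j * η i⌋ = ⌊(2 : ℝ) ^ j * ξ i⌋}

/-- The average of `f` over the standard dyadic cube of generation `j` containing `ξ`. -/
def cubeAvg {n : ℕ} {𝒳 : Type*} [NormedAddCommGroup 𝒳] [NormedSpace ℝ 𝒳]
    (f : (Fin n → ℝ) → 𝒳) (j : ℤ) (ξ : Fin n → ℝ) : 𝒳 :=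
  ((2 : ℝ) ^ (j * (n : ℤ))) • ∫ η in dyCube n j ξ, f η

/-- The Rademacher maximal function w.r.t. the standard dyadic cubes in `ℝⁿ`. -/
def MRcube {n : ℕ} {𝒳 : Type*} [NormedAddCommGroup 𝒳] [NormedSpace ℝ 𝒳]
    (f : (Fin n → ℝ) → 𝒳) (ξ : Fin n → ℝ) : ℝ≥0∞ :=
  Rbound {y : 𝒳 | ∃ j : ℤ, y = cubeAvg f j ξ}

/-- The Rademacher maximal function w.r.t. the dyadic intervals of `[0,1)`. -/
def MRdyadic01 {𝒳 : Type*} [NormedAddCommGroup 𝒳] [NormedSpace ℝ 𝒳]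
    (f : ℝ → 𝒳) (ξ : ℝ) : ℝ≥0∞ :=
  Rbound {y : 𝒳 | ∃ j : ℕ, y = dyAvg f (j : ℤ) ξ}

/-- The operator-valued Rademacher maximal function w.r.t. the standard dyadic
intervals on `ℝ`. -/
def MRlineOp {H E : Type*} [NormedAddCommGroup H] [NormedSpace ℝ H]
    [NormedAddCommGroup E] [NormedSpace ℝ E] (f : ℝ → (H →L[ℝ] E)) (ξ : ℝ) : ℝ≥0∞ :=
  RboundOp {T : H →L[ℝ] E | ∃ j : ℤ, T = dyAvg f j ξ}

/-- The operator-valued Rademacher maximal function w.r.t. the dyadic intervals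
of `[0,1)`. -/
def MRdyadic01Op {H E : Type*} [NormedAddCommGroup H] [NormedSpace ℝ H]
    [NormedAddCommGroup E] [NormedSpace ℝ E] (f : ℝ → (H →L[ℝ] E)) (ξ : ℝ) : ℝ≥0∞ :=
  RboundOp {T : H →L[ℝ] E | ∃ j : ℕ, T = dyAvg f (j : ℤ) ξ}

/-- The Rademacher maximal function w.r.t. a family of sub-σ-algebras. -/
def MRfilt {𝒳 : Type*} [NormedAddCommGroup 𝒳] [NormedSpace ℝ 𝒳] [CompleteSpace 𝒳]
    {Ω ι : Type*} [m0 : MeasurableSpace Ω] (μ : Measure Ω) (m : ι → MeasurableSpace Ω)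
    (f : Ω → 𝒳) (ξ : Ω) : ℝ≥0∞ :=
  Rbound {y : 𝒳 | ∃ j : ι, y = (μ[f| m j]) ξ}

/-- `𝒳` has `RMF_p` with constant `C` w.r.t. the family `m` of sub-σ-algebras on `(Ω, μ)`. -/
def RMFpWith (𝒳 : Type*) [NormedAddCommGroup 𝒳] [NormedSpace ℝ 𝒳] [CompleteSpace 𝒳]
    (p C : ℝ) {Ω ι : Type*} [m0 : MeasurableSpace Ω] (μ : Measure Ω)
    (m : ι → MeasurableSpace Ω) : Prop :=
  ∀ f : Ω → 𝒳, MemLp f (ENNReal.ofReal p) μ →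
    (∫⁻ ξ, MRfilt μ m f ξ ^ p ∂μ) ^ (1 / p) ≤
      ENNReal.ofReal C * eLpNorm f (ENNReal.ofReal p) μ

/-- A measure is divisible if any set of positive measure contains subsets of any
prescribed fraction of its measure. -/
def Divisible {Ω : Type*} [MeasurableSpace Ω] (μ : Measure Ω) : Prop :=
  ∀ A : Set Ω, MeasurableSet A → 0 < μ A → ∀ c : ℝ, 0 < c → c < 1 →
    ∃ B : Set Ω, MeasurableSet B ∧ B ⊆ A ∧ μ B = ENNReal.ofReal c * μ A

/-- A Haar filtration on `(Ω, μ)`: `part j` is the generating partition of the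
`(j+1)`-st σ-algebra of the filtration (so it has `j + 2` members), and each
partition arises from the previous one by splitting the set `splitSet j` into the
two pieces `piece1 j` and `piece2 j` of positive measure; `part 0` itself arises by
splitting `Ω` in two. -/
structure HaarSystem (Ω : Type*) [m0 : MeasurableSpace Ω] (μ : Measure Ω) where
  part : ℕ → Finset (Set Ω)
  card_part : ∀ j, (part j).card = j + 2
  meas : ∀ j, ∀ A ∈ part j, MeasurableSet A
  disj : ∀ j, ∀ A ∈ part j, ∀ B ∈ part j, A ≠ B → Disjoint A B
  cover : ∀ j, ⋃₀ (↑(part j) : Set (Set Ω)) = Set.univ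
  pos : ∀ j, ∀ A ∈ part j, 0 < μ A
  splitSet : ℕ → Set Ω
  piece1 : ℕ → Set Ω
  piece2 : ℕ → Set Ω
  splitSet_mem : ∀ j, splitSet j ∈ part j
  union_pieces : ∀ j, piece1 j ∪ piece2 j = splitSet j
  disj_pieces : ∀ j, Disjoint (piece1 j) (piece2 j)
  part_succ : ∀ j, part (j + 1) =
    insert (piece1 j) (insert (piece2 j) ((part j).erase (splitSet j)))

/-- The σ-algebras of a Haar filtration. -/
def HaarSystem.salg {Ω : Type*} [m0 : MeasurableSpace Ω] {μ : Measure Ω}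
    (S : HaarSystem Ω μ) (j : ℕ) : MeasurableSpace Ω :=
  MeasurableSpace.generateFrom (↑(S.part j) : Set (Set Ω))

/-- A Haar filtration is dyadic if in each splitting the measure of each piece is a
dyadic fraction of the measure of the split set. -/
def HaarSystem.IsDyadic {Ω : Type*} [m0 : MeasurableSpace Ω] {μ : Measure Ω}
    (S : HaarSystem Ω μ) : Prop :=
  (∀ A ∈ S.part 0, ∃ m k : ℕ, μ A = (m : ℝ≥0∞) / 2 ^ k * μ Set.univ) ∧
  ∀ j, ∃ m k : ℕ, μ (S.piece1 j) = (m : ℝ≥0∞) / 2 ^ k * μ (S.splitSet j)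

/-- A Haar filtration is standard if each splitting is into two pieces of equal measure. -/
def HaarSystem.IsStandard {Ω : Type*} [m0 : MeasurableSpace Ω] {μ : Measure Ω}
    (S : HaarSystem Ω μ) : Prop :=
  (∀ A ∈ S.part 0, μ A = μ Set.univ / 2) ∧
  ∀ j, μ (S.piece1 j) = μ (S.splitSet j) / 2

/-- A filtration of finite sub-σ-algebras, given by finite generating partitions
into sets of positive measure. -/
structure PartitionFiltration (Ω : Type*) [m0 : MeasurableSpace Ω] (μ : Measure Ω) where
  part : ℕ → Finset (Set Ω)
  meas : ∀ j, ∀ A ∈ part j, MeasurableSet A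
  disj : ∀ j, ∀ A ∈ part j, ∀ B ∈ part j, A ≠ B → Disjoint A B
  cover : ∀ j, ⋃₀ (↑(part j) : Set (Set Ω)) = Set.univ
  pos : ∀ j, ∀ A ∈ part j, 0 < μ A
  mono : ∀ j, MeasurableSpace.generateFrom (↑(part j) : Set (Set Ω)) ≤
    MeasurableSpace.generateFrom (↑(part (j + 1)) : Set (Set Ω))

/-- The natural σ-algebra `σ(X_1, …, X_j)` of a process. -/
def natSig {𝒳 Ω : Type*} [NormedAddCommGroup 𝒳] (X : ℕ → Ω → 𝒳) (j : ℕ) :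
    MeasurableSpace Ω :=
  ⨆ i ∈ Set.Icc 1 j, MeasurableSpace.comap (X i) (borel 𝒳)

/-- `(X_j)_{j ≥ 1}` is a martingale (w.r.t. its natural filtration). -/
def IsMart {𝒳 : Type*} [NormedAddCommGroup 𝒳] [NormedSpace ℝ 𝒳] [CompleteSpace 𝒳]
    {Ω : Type*} [m0 : MeasurableSpace Ω] (μ : Measure Ω) (X : ℕ → Ω → 𝒳) : Prop :=
  (∀ j, 1 ≤ j → Integrable (X j) μ) ∧ (∀ j, 1 ≤ j → natSig X j ≤ m0) ∧
  ∀ j k, 1 ≤ j → j ≤ k → (μ[X k| natSig X j]) =ᵐ[μ] X j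

/-- `‖X‖_p = sup_{j ≥ 1} (𝔼 ‖X_j‖^p)^{1/p}`. -/
def martNorm {𝒳 : Type*} [NormedAddCommGroup 𝒳] {Ω : Type*} [m0 : MeasurableSpace Ω]
    (μ : Measure Ω) (X : ℕ → Ω → 𝒳) (p : ℝ≥0∞) : ℝ≥0∞ :=
  ⨆ j, ⨆ (_ : 1 ≤ j), eLpNorm (X j) p μ

/-- The Rademacher maximal function `X_R^* = 𝓡({X_j : j ≥ 1})` of a process. -/
def martR {𝒳 : Type*} [NormedAddCommGroup 𝒳] [NormedSpace ℝ 𝒳] {Ω : Type*}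
    (X : ℕ → Ω → 𝒳) (ω : Ω) : ℝ≥0∞ :=
  Rbound {y : 𝒳 | ∃ j, 1 ≤ j ∧ y = X j ω}

/-- Doob's maximal function `X^* = sup_{j ≥ 1} ‖X_j‖` of a process. -/
def martStar {𝒳 : Type*} [NormedAddCommGroup 𝒳] {Ω : Type*}
    (X : ℕ → Ω → 𝒳) (ω : Ω) : ℝ≥0∞ :=
  ⨆ j, ⨆ (_ : 1 ≤ j), (‖X j ω‖₊ : ℝ≥0∞)

/-- `𝒳` has weak RMF with constant `C`: every `L¹`-bounded martingale `X` in `𝒳`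
satisfies `ℙ(X_R^* > λ) ≤ (C/λ) ‖X‖₁`. -/
def WeakRMFConst (𝒳 : Type*) [NormedAddCommGroup 𝒳] [NormedSpace ℝ 𝒳]
    [CompleteSpace 𝒳] (C : ℝ) : Prop :=
  ∀ (Ω : Type u) (m0 : MeasurableSpace Ω) (μ : Measure Ω), IsProbabilityMeasure μ →
    ∀ X : ℕ → Ω → 𝒳, IsMart μ X → martNorm μ X 1 < ⊤ →
      ∀ lam : ℝ, 0 < lam →
        μ {ω | ENNReal.ofReal lam < martR X ω} ≤
          ENNReal.ofReal (C / lam) * martNorm μ X 1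

/-- A standard Haar martingale: a martingale whose natural filtration is a standard
Haar filtration. -/
def IsStdHaarMart {𝒳 : Type*} [NormedAddCommGroup 𝒳] [NormedSpace ℝ 𝒳] [CompleteSpace 𝒳]
    {Ω : Type*} [m0 : MeasurableSpace Ω] (μ : Measure Ω) (X : ℕ → Ω → 𝒳) : Prop :=
  IsMart μ X ∧ ∃ S : HaarSystem Ω μ, S.IsStandard ∧
    ∀ j, 1 ≤ j → natSig X j = S.salg (j - 1)

/-- A finite martingale `(X_j)_{j=1}^N`. -/
def IsFinMart {𝒳 : Type*} [NormedAddCommGroup 𝒳] [NormedSpace ℝ 𝒳] [CompleteSpace 𝒳]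
    {Ω : Type*} [m0 : MeasurableSpace Ω] (μ : Measure Ω) (X : ℕ → Ω → 𝒳) (N : ℕ) : Prop :=
  (∀ j, 1 ≤ j → j ≤ N → Integrable (X j) μ) ∧
  (∀ j, 1 ≤ j → j ≤ N → natSig X j ≤ m0) ∧
  ∀ j k, 1 ≤ j → j ≤ k → k ≤ N → (μ[X k| natSig X j]) =ᵐ[μ] X j

/-- A simple martingale `(X_j)_{j=1}^N`: a finite martingale all of whose random
variables take finitely many values. -/
def IsSimpleMart {𝒳 : Type*} [NormedAddCommGroup 𝒳] [NormedSpace ℝ 𝒳] [CompleteSpace 𝒳]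
    {Ω : Type*} [m0 : MeasurableSpace Ω] (μ : Measure Ω) (X : ℕ → Ω → 𝒳) (N : ℕ) : Prop :=
  IsFinMart μ X N ∧ ∀ j, 1 ≤ j → j ≤ N → (Set.range (X j)).Finite

/-- The (finite) set `{X_1(ω), …, X_k(ω)}`. -/
def martSet {𝒳 Ω : Type*} [DecidableEq 𝒳] (X : ℕ → Ω → 𝒳) (k : ℕ) (ω : Ω) : Finset 𝒳 :=
  (Finset.Icc 1 k).image fun i => X i ω


lemma ofReal_norm_eq_coe_nnnorm {E : Type*} [SeminormedAddCommGroup E] (x : E) :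
    ENNReal.ofReal ‖x‖ = (‖x‖₊ : ℝ≥0∞) := ofReal_norm x

lemma eLpNorm_eq_lintegral_rpow_nnnorm {α E : Type*} [MeasurableSpace α] {μ : Measure α}
    [NormedAddCommGroup E] {p : ℝ≥0∞} (h0 : p ≠ 0) (htop : p ≠ ⊤) {f : α → E} :
    eLpNorm f p μ = (∫⁻ x, (‖f x‖₊ : ℝ≥0∞) ^ p.toReal ∂μ) ^ (1 / p.toReal) :=
  eLpNorm_eq_lintegral_rpow_enorm_toReal h0 htop

lemma eLpNorm_one_eq_lintegral_nnnorm {α E : Type*} [MeasurableSpace α] {μ : Measure α}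
    [NormedAddCommGroup E] {f : α → E} :
    eLpNorm f 1 μ = ∫⁻ x, (‖f x‖₊ : ℝ≥0∞) ∂μ :=
  eLpNorm_one_eq_lintegral_enorm

section AuxRadAvg
/-! ### auxiliary lemmas on `radAvg` and `Rbound` -/

variable {E : Type*} [NormedAddCommGroup E] [NormedSpace ℝ E]

def sgn {N : ℕ} (ε : Fin N → Bool) (j : Fin N) : ℝ := if ε j then 1 else -1

lemma radAvg_eq_sgn {N : ℕ} (x : Fin N → E) :
    radAvg x = (2 ^ N : ℝ)⁻¹ * ∑ ε : Fin N → Bool, ‖∑ j, sgn ε j • x j‖ ^ 2 := rfl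

lemma radAvg_nonneg {N : ℕ} (x : Fin N → E) : 0 ≤ radAvg x :=
  mul_nonneg (by positivity) (Finset.sum_nonneg fun _ _ => by positivity)

lemma sgn_sq {N : ℕ} (ε : Fin N → Bool) (j : Fin N) : sgn ε j * sgn ε j = 1 := by
  unfold sgn; split <;> norm_num

lemma sum_sgn_mul_sgn {N : ℕ} (j k : Fin N) :
    ∑ ε : Fin N → Bool, sgn ε j * sgn ε k = if j = k then (2 : ℝ) ^ N else 0 := by
  split
  · next h =>
    subst h
    simp only [sgn_sq]
    simp [Finset.card_univ]
  · next h =>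
    refine Finset.sum_involution
      (fun ε _ => Function.update ε j (! ε j)) ?_ ?_ (fun _ _ => Finset.mem_univ _) ?_
    · intro ε _
      have hj : sgn (Function.update ε j (! ε j)) j = - sgn ε j := by
        unfold sgn
        simp only [Function.update_self]
        cases hε : ε j <;> simp
      have hk : sgn (Function.update ε j (! ε j)) k = sgn ε k := by
        unfold sgn
        rw [Function.update_of_ne (fun hkj => h hkj.symm)]
      rw [hj, hk]; ring
    · intro ε _ _ hcontra
      have := congrFun hcontra j
      simp at this
    · intro ε _
      funext i
      by_cases hi : i = j
      · subst hi; simp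
      · simp [Function.update_of_ne hi]

lemma sum_sq_sum_sgn {N : ℕ} (a : Fin N → ℝ) :
    ∑ ε : Fin N → Bool, (∑ j, sgn ε j * a j) ^ 2 = 2 ^ N * ∑ j, a j ^ 2 := by
  have h1 : ∀ ε : Fin N → Bool, (∑ j, sgn ε j * a j) ^ 2 =
      ∑ j, ∑ k, a j * a k * (sgn ε j * sgn ε k) := by
    intro ε
    rw [sq, Finset.sum_mul_sum]
    exact Finset.sum_congr rfl fun j _ => Finset.sum_congr rfl fun k _ => by ring
  simp only [h1]
  rw [Finset.sum_comm]
  have h2 : ∀ j : Fin N, (∑ ε : Fin N → Bool, ∑ k, a j * a k * (sgn ε j * sgn ε k))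
      = 2 ^ N * a j ^ 2 := by
    intro j
    rw [Finset.sum_comm]
    have h3 : ∀ k : Fin N, (∑ ε : Fin N → Bool, a j * a k * (sgn ε j * sgn ε k))
        = a j * a k * (if j = k then (2 : ℝ) ^ N else 0) := by
      intro k
      rw [← Finset.mul_sum, sum_sgn_mul_sgn]
    simp only [h3]
    rw [Finset.sum_eq_single j (fun k _ hk => by
      rw [if_neg (fun h => hk h.symm), mul_zero])
      (fun h => absurd (Finset.mem_univ j) h)]
    rw [if_pos rfl]; ring
  simp only [h2]
  rw [← Finset.mul_sum]

lemma radAvg_scalar {N : ℕ} (l : Fin N → ℝ) : radAvg l = ∑ j, l j ^ 2 := by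
  rw [radAvg_eq_sgn]
  simp only [smul_eq_mul, Real.norm_eq_abs, sq_abs]
  rw [sum_sq_sum_sgn, ← mul_assoc, inv_mul_cancel₀ (by positivity), one_mul]

lemma radAvg_smul_const {N : ℕ} (l : Fin N → ℝ) (T : E) :
    radAvg (fun j => l j • T) = ‖T‖ ^ 2 * radAvg l := by
  rw [radAvg_eq_sgn, radAvg_scalar]
  have h1 : ∀ ε : Fin N → Bool,
      ‖∑ j, sgn ε j • l j • T‖ ^ 2 = (∑ j, sgn ε j * l j) ^ 2 * ‖T‖ ^ 2 := by
    intro ε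
    have h2 : ∑ j, sgn ε j • l j • T = (∑ j, sgn ε j * l j) • T := by
      rw [Finset.sum_smul]
      exact Finset.sum_congr rfl fun j _ => smul_smul _ _ _
    rw [h2, norm_smul, Real.norm_eq_abs, mul_pow, sq_abs]
  simp only [h1]
  rw [← Finset.sum_mul, sum_sq_sum_sgn]
  have h2 : ((2 : ℝ) ^ N) ≠ 0 := by positivity
  field_simp

lemma sqrt_radAvg_add_le {N : ℕ} (u v : Fin N → E) :
    Real.sqrt (radAvg (fun j => u j + v j)) ≤
      Real.sqrt (radAvg u) + Real.sqrt (radAvg v) := by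
  set c : ℝ := (2 ^ N : ℝ)⁻¹ with hc
  have hc0 : 0 ≤ c := by positivity
  set U : (Fin N → Bool) → ℝ := fun ε => ‖∑ j, sgn ε j • u j‖ with hU
  set V : (Fin N → Bool) → ℝ := fun ε => ‖∑ j, sgn ε j • v j‖ with hV
  have hUV : 0 ≤ ∑ ε, U ε * V ε :=
    Finset.sum_nonneg fun ε _ => mul_nonneg (norm_nonneg _) (norm_nonneg _)
  have hU2 : radAvg u = c * ∑ ε, U ε ^ 2 := radAvg_eq_sgn u
  have hV2 : radAvg v = c * ∑ ε, V ε ^ 2 := radAvg_eq_sgn v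
  have hCS : (∑ ε, U ε * V ε) ≤ Real.sqrt (∑ ε, U ε ^ 2) * Real.sqrt (∑ ε, V ε ^ 2) := by
    have h := Finset.sum_mul_sq_le_sq_mul_sq Finset.univ U V
    have := Real.sqrt_le_sqrt h
    rwa [Real.sqrt_sq hUV, Real.sqrt_mul (Finset.sum_nonneg fun ε _ => sq_nonneg _)] at this
  have key : radAvg (fun j => u j + v j) ≤
      (Real.sqrt (radAvg u) + Real.sqrt (radAvg v)) ^ 2 := by
    have h1 : radAvg (fun j => u j + v j) ≤ c * ∑ ε, (U ε + V ε) ^ 2 := by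
      rw [radAvg_eq_sgn]
      refine mul_le_mul_of_nonneg_left (Finset.sum_le_sum fun ε _ => ?_) hc0
      have h2 : ∑ j, sgn ε j • (u j + v j) = (∑ j, sgn ε j • u j) + ∑ j, sgn ε j • v j := by
        rw [← Finset.sum_add_distrib]
        exact Finset.sum_congr rfl fun j _ => smul_add _ _ _
      rw [h2]
      exact pow_le_pow_left₀ (norm_nonneg _) (norm_add_le _ _) 2
    have h3 : c * ∑ ε, (U ε + V ε) ^ 2 =
        c * ∑ ε, U ε ^ 2 + 2 * (c * ∑ ε, U ε * V ε) + c * ∑ ε, V ε ^ 2 := by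
      have : ∀ ε : Fin N → Bool, (U ε + V ε) ^ 2 = U ε ^ 2 + 2 * (U ε * V ε) + V ε ^ 2 := by
        intro ε; ring
      simp only [this]
      rw [Finset.sum_add_distrib, Finset.sum_add_distrib, ← Finset.mul_sum]
      ring
    have h4 : c * ∑ ε, U ε * V ε ≤
        Real.sqrt (radAvg u) * Real.sqrt (radAvg v) := by
      rw [hU2, hV2, Real.sqrt_mul hc0, Real.sqrt_mul hc0]
      have hcc : c = Real.sqrt c * Real.sqrt c := (Real.mul_self_sqrt hc0).symm
      calc c * ∑ ε, U ε * V ε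
          ≤ c * (Real.sqrt (∑ ε, U ε ^ 2) * Real.sqrt (∑ ε, V ε ^ 2)) :=
            mul_le_mul_of_nonneg_left hCS hc0
        _ = Real.sqrt c * Real.sqrt (∑ ε, U ε ^ 2) *
              (Real.sqrt c * Real.sqrt (∑ ε, V ε ^ 2)) := by
            conv_lhs => rw [hcc]
            ring
    have h5 : (Real.sqrt (radAvg u) + Real.sqrt (radAvg v)) ^ 2 =
        radAvg u + 2 * (Real.sqrt (radAvg u) * Real.sqrt (radAvg v)) + radAvg v := by
      rw [add_sq, Real.sq_sqrt (radAvg_nonneg u), Real.sq_sqrt (radAvg_nonneg v)]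
      ring
    rw [h5, hU2, hV2]
    calc radAvg (fun j => u j + v j) ≤ c * ∑ ε, (U ε + V ε) ^ 2 := h1
      _ = c * ∑ ε, U ε ^ 2 + 2 * (c * ∑ ε, U ε * V ε) + c * ∑ ε, V ε ^ 2 := h3
      _ ≤ c * ∑ ε, U ε ^ 2 + 2 * (Real.sqrt (radAvg u) * Real.sqrt (radAvg v))
            + c * ∑ ε, V ε ^ 2 := by
          have := h4
          rw [hU2, hV2] at this ⊢
          linarith
  have := Real.sqrt_le_sqrt key
  rwa [Real.sqrt_sq (by positivity)] at this

lemma IsRBound.anti {S S' : Set E} {r : ℝ} (hS : S ⊆ S') (h : IsRBound S' r) :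
    IsRBound S r :=
  ⟨h.1, fun N y l hy => h.2 N y l fun j => hS (hy j)⟩

lemma Rbound_le_ofReal {S : Set E} {r : ℝ} (h : IsRBound S r) :
    Rbound S ≤ ENNReal.ofReal r := sInf_le ⟨r, h, rfl⟩

lemma Rbound_mono {S S' : Set E} (hS : S ⊆ S') : Rbound S ≤ Rbound S' :=
  sInf_le_sInf fun c hc => by
    obtain ⟨r, hr, rfl⟩ := hc
    exact ⟨r, hr.anti hS, rfl⟩

lemma isRBound_singleton (T : E) : IsRBound {T} ‖T‖ := by
  refine ⟨norm_nonneg T, fun N y l hy => ?_⟩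
  have h1 : (fun j => l j • y j) = fun j => l j • T := funext fun j => by rw [hy j]
  rw [h1, radAvg_smul_const, sq]

lemma radAvg_le_of_sq_le {N : ℕ} {l m : Fin N → ℝ} (h : ∀ j, m j ^ 2 ≤ l j ^ 2) :
    radAvg m ≤ radAvg l := by
  rw [radAvg_scalar, radAvg_scalar]
  exact Finset.sum_le_sum fun j _ => h j

lemma IsRBound.union {A B : Set E} {rA rB : ℝ} (hA : IsRBound A rA) (hB : IsRBound B rB) :
    IsRBound (A ∪ B) (rA + rB) := by
  have hAB : (0 : ℝ) ≤ rA + rB := by linarith [hA.1, hB.1]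
  refine ⟨hAB, fun N y l hy => ?_⟩
  by_cases hall : ∀ j, y j ∈ A
  · calc radAvg (fun j => l j • y j) ≤ rA ^ 2 * radAvg l := hA.2 N y l hall
      _ ≤ (rA + rB) ^ 2 * radAvg l :=
        mul_le_mul_of_nonneg_right (pow_le_pow_left₀ hA.1 (by linarith [hB.1]) 2)
          (radAvg_nonneg l)
  by_cases hallB : ∀ j, y j ∉ A
  · have hmem : ∀ j, y j ∈ B := fun j => (hy j).resolve_left (hallB j)
    calc radAvg (fun j => l j • y j) ≤ rB ^ 2 * radAvg l := hB.2 N y l hmem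
      _ ≤ (rA + rB) ^ 2 * radAvg l :=
        mul_le_mul_of_nonneg_right (pow_le_pow_left₀ hB.1 (by linarith [hA.1]) 2)
          (radAvg_nonneg l)
  push_neg at hall hallB
  obtain ⟨j₁, hj₁⟩ := hall
  obtain ⟨j₀, hj₀⟩ := hallB
  have hj₁B : y j₁ ∈ B := (hy j₁).resolve_left hj₁
  set lA : Fin N → ℝ := fun j => if y j ∈ A then l j else 0 with hlA
  set lB : Fin N → ℝ := fun j => if y j ∈ A then 0 else l j with hlB
  set yA : Fin N → E := fun j => if y j ∈ A then y j else y j₀ with hyA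
  set yB : Fin N → E := fun j => if y j ∈ A then y j₁ else y j with hyB
  have hdec : (fun j => l j • y j) = fun j => lA j • yA j + lB j • yB j := by
    funext j
    by_cases hj : y j ∈ A <;> simp [hlA, hlB, hyA, hyB, hj]
  have hAmem : ∀ j, yA j ∈ A := by
    intro j; by_cases hj : y j ∈ A <;> simp [hyA, hj, hj₀]
  have hBmem : ∀ j, yB j ∈ B := by
    intro j
    by_cases hj : y j ∈ A
    · simp [hyB, hj, hj₁B]
    · simpa [hyB, hj] using (hy j).resolve_left hj
  have hmaskA : radAvg lA ≤ radAvg l := by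
    apply radAvg_le_of_sq_le
    intro j; by_cases hj : y j ∈ A <;> simp [hlA, hj] <;> positivity
  have hmaskB : radAvg lB ≤ radAvg l := by
    apply radAvg_le_of_sq_le
    intro j; by_cases hj : y j ∈ A <;> simp [hlB, hj] <;> positivity
  have hu : radAvg (fun j => lA j • yA j) ≤ rA ^ 2 * radAvg l :=
    le_trans (hA.2 N yA lA hAmem) (mul_le_mul_of_nonneg_left hmaskA (sq_nonneg rA))
  have hv : radAvg (fun j => lB j • yB j) ≤ rB ^ 2 * radAvg l :=
    le_trans (hB.2 N yB lB hBmem) (mul_le_mul_of_nonneg_left hmaskB (sq_nonneg rB))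
  have h1 : Real.sqrt (radAvg fun j => lA j • yA j) ≤ rA * Real.sqrt (radAvg l) := by
    have := Real.sqrt_le_sqrt hu
    rwa [Real.sqrt_mul (sq_nonneg rA), Real.sqrt_sq hA.1] at this
  have h2 : Real.sqrt (radAvg fun j => lB j • yB j) ≤ rB * Real.sqrt (radAvg l) := by
    have := Real.sqrt_le_sqrt hv
    rwa [Real.sqrt_mul (sq_nonneg rB), Real.sqrt_sq hB.1] at this
  have hsq : Real.sqrt (radAvg (fun j => l j • y j)) ≤ (rA + rB) * Real.sqrt (radAvg l) := by
    rw [hdec]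
    calc Real.sqrt (radAvg fun j => lA j • yA j + lB j • yB j)
        ≤ Real.sqrt (radAvg fun j => lA j • yA j) + Real.sqrt (radAvg fun j => lB j • yB j) :=
          sqrt_radAvg_add_le _ _
      _ ≤ (rA + rB) * Real.sqrt (radAvg l) := by linarith
  have hfin := pow_le_pow_left₀ (Real.sqrt_nonneg _) hsq 2
  rwa [Real.sq_sqrt (radAvg_nonneg _), mul_pow, Real.sq_sqrt (radAvg_nonneg l)] at hfin

lemma isRBound_finset (F : Finset E) : IsRBound (↑F : Set E) (∑ x ∈ F, ‖x‖) := by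
  classical
  induction F using Finset.induction_on with
  | empty =>
    refine ⟨by simp, fun N y l hy => ?_⟩
    cases N with
    | zero =>
      have : radAvg (fun j : Fin 0 => l j • y j) = 0 := by
        simp [radAvg]
      rw [this]
      exact mul_nonneg (sq_nonneg _) (radAvg_nonneg l)
    | succ n => exact absurd (hy 0) (by simp)
  | insert x F' hx ih =>
    rw [Finset.coe_insert, Set.insert_eq, Finset.sum_insert hx]
    exact (isRBound_singleton x).union ih

lemma Rbound_coe_ne_top (F : Finset E) : Rbound (↑F : Set E) ≠ ⊤ :=
  ne_top_of_le_ne_top ENNReal.ofReal_ne_top (Rbound_le_ofReal (isRBound_finset F))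

lemma rb_mono {S S' : Set E} (h : S ⊆ S') (h' : Rbound S' ≠ ⊤) :
    (Rbound S).toReal ≤ (Rbound S').toReal := ENNReal.toReal_mono h' (Rbound_mono h)

lemma Rbound_iUnion_monotone (𝒮 : ℕ → Set E) (hmono : Monotone 𝒮) :
    Rbound (⋃ N, 𝒮 N) = ⨆ N, Rbound (𝒮 N) := by
  refine le_antisymm ?_ (iSup_le fun N => Rbound_mono (Set.subset_iUnion 𝒮 N))
  set s := ⨆ N, Rbound (𝒮 N) with hs
  apply ENNReal.le_of_forall_pos_le_add
  intro ε hε hlt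
  have hst : s + (ε : ℝ≥0∞) ≠ ⊤ := by
    exact ENNReal.add_ne_top.mpr ⟨hlt.ne, ENNReal.coe_ne_top⟩
  set r : ℝ := (s + (ε : ℝ≥0∞)).toReal with hr
  have hrN : ∀ N, ∃ rN : ℝ, IsRBound (𝒮 N) rN ∧ rN ≤ r := by
    intro N
    have h1 : Rbound (𝒮 N) < s + (ε : ℝ≥0∞) :=
      lt_of_le_of_lt (le_iSup (fun N => Rbound (𝒮 N)) N)
        (ENNReal.lt_add_right hlt.ne (by exact_mod_cast hε.ne'))
    obtain ⟨c, ⟨rN, hrN, rfl⟩, hc⟩ := sInf_lt_iff.mp h1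
    refine ⟨rN, hrN, ?_⟩
    have h2 := ENNReal.toReal_mono hst hc.le
    rwa [ENNReal.toReal_ofReal hrN.1] at h2
  choose rN hrN1 hrN2 using hrN
  have hbound : IsRBound (⋃ N, 𝒮 N) r := by
    refine ⟨ENNReal.toReal_nonneg, fun M y l hy => ?_⟩
    have hex : ∀ j, ∃ N, y j ∈ 𝒮 N := fun j => Set.mem_iUnion.mp (hy j)
    choose φ hφ using hex
    set Nstar := Finset.univ.sup φ with hN
    have hmem : ∀ j, y j ∈ 𝒮 Nstar := fun j =>
      hmono (Finset.le_sup (Finset.mem_univ j)) (hφ j)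
    calc radAvg (fun j => l j • y j) ≤ rN Nstar ^ 2 * radAvg l :=
          (hrN1 Nstar).2 M y l hmem
      _ ≤ r ^ 2 * radAvg l :=
          mul_le_mul_of_nonneg_right (pow_le_pow_left₀ (hrN1 Nstar).1 (hrN2 Nstar) 2)
            (radAvg_nonneg l)
  calc Rbound (⋃ N, 𝒮 N) ≤ ENNReal.ofReal r := Rbound_le_ofReal hbound
    _ = s + (ε : ℝ≥0∞) := ENNReal.ofReal_toReal hst

lemma ENNReal_iSup_rpow {p : ℝ} (hp : 0 < p) (f : ℕ → ℝ≥0∞) :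
    (⨆ n, f n) ^ p = ⨆ n, f n ^ p := by
  refine le_antisymm ?_ (iSup_le fun n => ENNReal.rpow_le_rpow (le_iSup f n) hp.le)
  have h1 : (⨆ n, f n) ≤ (⨆ n, f n ^ p) ^ (1 / p) := by
    refine iSup_le fun n => ?_
    have h2 : f n = (f n ^ p) ^ (1 / p) := by
      rw [← ENNReal.rpow_mul, mul_one_div, div_self hp.ne', ENNReal.rpow_one]
    rw [h2]
    exact ENNReal.rpow_le_rpow (le_iSup (fun n => f n ^ p) n) (by positivity)
  calc (⨆ n, f n) ^ p ≤ (((⨆ n, f n ^ p) ^ (1 / p)) ^ p) := ENNReal.rpow_le_rpow h1 hp.le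
    _ = ⨆ n, f n ^ p := by
      rw [← ENNReal.rpow_mul, one_div, inv_mul_cancel₀ hp.ne', ENNReal.rpow_one]


end AuxRadAvg

section AuxDyadic
/-- The dyadic interval `[k/2^N, (k+1)/2^N)`. -/
def dyI (N k : ℕ) : Set ℝ := Set.Ico ((k : ℝ) / 2 ^ N) (((k : ℝ) + 1) / 2 ^ N)

lemma dyI_measurableSet (N k : ℕ) : MeasurableSet (dyI N k) := measurableSet_Ico

lemma dyI_subset_Ico {N k : ℕ} (hk : k < 2 ^ N) : dyI N k ⊆ Set.Ico (0 : ℝ) 1 := by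
  apply Set.Ico_subset_Ico
  · positivity
  · rw [div_le_one (by positivity)]
    have : (k : ℝ) + 1 ≤ (2 : ℝ) ^ N := by
      have : ((k + 1 : ℕ) : ℝ) ≤ ((2 ^ N : ℕ) : ℝ) := Nat.cast_le.mpr hk
      push_cast at this
      push_cast
      linarith
    linarith

lemma volume_dyI (N k : ℕ) : volume (dyI N k) = ENNReal.ofReal ((2 : ℝ)⁻¹ ^ N) := by
  rw [dyI, Real.volume_Ico]
  congr 1
  field_simp
  rw [← mul_pow]; norm_num

lemma mem_dyI_floor {N k : ℕ} {ξ : ℝ} (hξ : ξ ∈ dyI N k) : ⌊(2 : ℝ) ^ N * ξ⌋ = (k : ℤ) := by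
  obtain ⟨h1, h2⟩ := hξ
  have hpow : (0 : ℝ) < 2 ^ N := by positivity
  rw [div_le_iff₀ hpow] at h1
  rw [lt_div_iff₀ hpow] at h2
  rw [Int.floor_eq_iff]
  constructor
  · push_cast
    nlinarith
  · push_cast
    nlinarith

lemma exists_mem_dyI {N : ℕ} {ξ : ℝ} (hξ : ξ ∈ Set.Ico (0 : ℝ) 1) :
    ∃ k : ℕ, k < 2 ^ N ∧ ξ ∈ dyI N k := by
  obtain ⟨h0, h1⟩ := hξ
  have hpow : (0 : ℝ) < 2 ^ N := by positivity
  have hfl0 : (0 : ℤ) ≤ ⌊(2 : ℝ) ^ N * ξ⌋ := Int.floor_nonneg.mpr (by positivity)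
  set k : ℕ := (⌊(2 : ℝ) ^ N * ξ⌋).toNat with hk
  have hcast : ((k : ℤ) : ℝ) = (k : ℝ) := by norm_cast
  have hkfl : ((k : ℕ) : ℤ) = ⌊(2 : ℝ) ^ N * ξ⌋ := Int.toNat_of_nonneg hfl0
  have hle : (k : ℝ) ≤ 2 ^ N * ξ := by
    have := Int.floor_le ((2 : ℝ) ^ N * ξ)
    rw [← hkfl] at this
    exact_mod_cast this
  have hlt : 2 ^ N * ξ < (k : ℝ) + 1 := by
    have := Int.lt_floor_add_one ((2 : ℝ) ^ N * ξ)
    rw [← hkfl] at this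
    exact_mod_cast this
  refine ⟨k, ?_, ?_, ?_⟩
  · have : (k : ℝ) < 2 ^ N := lt_of_le_of_lt hle (by nlinarith)
    exact_mod_cast this
  · rw [div_le_iff₀ hpow]; linarith [mul_comm ((2:ℝ)^N) ξ]
  · rw [lt_div_iff₀ hpow]; linarith [mul_comm ((2:ℝ)^N) ξ]

lemma dyI_subset_ancestor {N i k : ℕ} (hi : i ≤ N) :
    dyI N k ⊆ dyI i (k / 2 ^ (N - i)) := by
  set m := N - i with hm
  have hNm : N = i + m := by omega
  set q := k / 2 ^ m with hq
  have hd := Nat.div_add_mod k (2 ^ m)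
  have hmod : k % 2 ^ m < 2 ^ m := Nat.mod_lt k (Nat.two_pow_pos m)
  have hql : q * 2 ^ m ≤ k := Nat.div_mul_le_self k (2 ^ m)
  have hd' : q * 2 ^ m + k % 2 ^ m = k := by rw [mul_comm] at hd; exact hd
  have hqu : k + 1 ≤ (q + 1) * 2 ^ m := by
    have : k < (q + 1) * 2 ^ m := by
      rw [add_mul, one_mul]
      omega
    omega
  apply Set.Ico_subset_Ico
  · rw [div_le_div_iff₀ (by positivity) (by positivity)]
    have hcast : ((q * 2 ^ m : ℕ) : ℝ) ≤ ((k : ℕ) : ℝ) := Nat.cast_le.mpr hql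
    push_cast at hcast
    rw [hNm, pow_add]
    nlinarith [pow_pos (by norm_num : (0:ℝ) < 2) i, pow_pos (by norm_num : (0:ℝ) < 2) m]
  · rw [div_le_div_iff₀ (by positivity) (by positivity)]
    have hcast : ((k + 1 : ℕ) : ℝ) ≤ (((q + 1) * 2 ^ m : ℕ) : ℝ) := Nat.cast_le.mpr hqu
    push_cast at hcast
    rw [hNm, pow_add]
    nlinarith [pow_pos (by norm_num : (0:ℝ) < 2) i, pow_pos (by norm_num : (0:ℝ) < 2) m]

lemma floor_of_mem_dyI_ancestor {N i k : ℕ} (hi : i ≤ N) {ξ : ℝ} (hξ : ξ ∈ dyI N k) :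
    ⌊(2 : ℝ) ^ i * ξ⌋ = ((k / 2 ^ (N - i) : ℕ) : ℤ) :=
  mem_dyI_floor (dyI_subset_ancestor hi hξ)

lemma dyI_disjoint {N k k' : ℕ} (h : k ≠ k') : Disjoint (dyI N k) (dyI N k') := by
  rw [Set.disjoint_left]
  intro ξ h1 h2
  have := mem_dyI_floor h1
  have := mem_dyI_floor h2
  omega

lemma Ico_eq_biUnion_dyI (N : ℕ) :
    Set.Ico (0 : ℝ) 1 = ⋃ k ∈ Finset.range (2 ^ N), dyI N k := by
  ext ξ
  constructor
  · intro hξ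
    obtain ⟨k, hk, hmem⟩ := exists_mem_dyI (N := N) hξ
    exact Set.mem_biUnion (Finset.mem_range.mpr hk) hmem
  · intro hξ
    obtain ⟨k, hk, hmem⟩ := Set.mem_iUnion₂.mp hξ
    exact dyI_subset_Ico (Finset.mem_range.mp hk) hmem

lemma lintegral_Ico_eq_sum_dyI (N : ℕ) (g : ℝ → ℝ≥0∞) :
    ∫⁻ ξ in Set.Ico (0 : ℝ) 1, g ξ = ∑ k ∈ Finset.range (2 ^ N), ∫⁻ ξ in dyI N k, g ξ := by
  rw [Ico_eq_biUnion_dyI N]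
  exact lintegral_biUnion_finset
    (fun k _ k' _ hkk' => dyI_disjoint hkk')
    (fun k _ => dyI_measurableSet N k) g

lemma setLIntegral_dyI_const' {N k : ℕ} {g : ℝ → ℝ≥0∞} {c : ℝ≥0∞}
    (h : ∀ ξ ∈ dyI N k, g ξ = c) :
    ∫⁻ ξ in dyI N k, g ξ = c * ENNReal.ofReal ((2 : ℝ)⁻¹ ^ N) := by
  rw [setLIntegral_congr_fun (dyI_measurableSet N k) h,
    setLIntegral_const, volume_dyI]

/-- The two halves of a dyadic interval. -/
lemma dyI_split (N k : ℕ) : dyI N k = dyI (N + 1) (2 * k) ∪ dyI (N + 1) (2 * k + 1) := by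
  unfold dyI
  have hb : ((2 * k : ℕ) : ℝ) + 1 = ((2 * k + 1 : ℕ) : ℝ) := by push_cast; ring
  have h1 : ((2 * k : ℕ) : ℝ) / 2 ^ (N + 1) ≤ ((2 * k + 1 : ℕ) : ℝ) / 2 ^ (N + 1) := by
    have : ((2 * k : ℕ) : ℝ) ≤ ((2 * k + 1 : ℕ) : ℝ) := by push_cast; linarith
    gcongr
  have h2 : ((2 * k + 1 : ℕ) : ℝ) / 2 ^ (N + 1) ≤ (((2 * k + 1 : ℕ) : ℝ) + 1) / 2 ^ (N + 1) := by
    gcongr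
    linarith
  have e1 : ((2 * k : ℕ) : ℝ) / 2 ^ (N + 1) = (k : ℝ) / 2 ^ N := by push_cast; ring
  have e2 : (((2 * k + 1 : ℕ) : ℝ) + 1) / 2 ^ (N + 1) = ((k : ℝ) + 1) / 2 ^ N := by
    push_cast; ring
  rw [hb, Set.Ico_union_Ico_eq_Ico h1 h2, e1, e2]


end AuxDyadic

section Aux
variable {𝒳 : Type*} [NormedAddCommGroup 𝒳] [NormedSpace ℝ 𝒳] [CompleteSpace 𝒳]
  [DecidableEq 𝒳]
/-- The average of `f` over the dyadic interval `[k/2^N, (k+1)/2^N)`. -/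
def nodeAvg (f : ℝ → 𝒳) (N k : ℕ) : 𝒳 := (2 ^ N : ℝ) • ∫ t in dyI N k, f t

/-- The set of averages of `f` along the ancestors of `[k/2^N, (k+1)/2^N)`. -/
def pathNode (f : ℝ → 𝒳) (N k : ℕ) : Finset 𝒳 :=
  (Finset.range (N + 1)).image fun i => nodeAvg f i (k / 2 ^ (N - i))

lemma dyAvg_eq_nodeAvg {f : ℝ → 𝒳} {N i k : ℕ} (hi : i ≤ N) {ξ : ℝ} (hξ : ξ ∈ dyI N k) :
    dyAvg f (i : ℤ) ξ = nodeAvg f i (k / 2 ^ (N - i)) := by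
  unfold dyAvg nodeAvg dyI
  rw [show ((2 : ℝ) ^ (i : ℤ)) = (2 : ℝ) ^ i from zpow_natCast 2 i,
    floor_of_mem_dyI_ancestor hi hξ, Int.cast_natCast]

lemma MRdyadic01_eq_iSup (f : ℝ → 𝒳) (ξ : ℝ) :
    MRdyadic01 f ξ =
      ⨆ N, Rbound (↑((Finset.range (N + 1)).image fun i : ℕ => dyAvg f (i : ℤ) ξ) : Set 𝒳) := by
  unfold MRdyadic01
  have hmono : Monotone fun N =>
      (↑((Finset.range (N + 1)).image fun i : ℕ => dyAvg f (i : ℤ) ξ) : Set 𝒳) := by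
    intro M N hMN
    dsimp only
    rw [Finset.coe_image, Finset.coe_image]
    exact Set.image_mono (by exact_mod_cast Finset.range_subset_range.mpr (by omega))
  rw [show {y : 𝒳 | ∃ j : ℕ, y = dyAvg f (j : ℤ) ξ} =
      ⋃ N, (↑((Finset.range (N + 1)).image fun i : ℕ => dyAvg f (i : ℤ) ξ) : Set 𝒳) from ?_,
    Rbound_iUnion_monotone _ hmono]
  ext y
  simp only [Set.mem_setOf_eq, Set.mem_iUnion, Finset.coe_image, Set.mem_image,
    Finset.mem_coe, Finset.mem_range]
  constructor
  · rintro ⟨j, rfl⟩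
    exact ⟨j, j, by omega, rfl⟩
  · rintro ⟨N, i, _, rfl⟩
    exact ⟨i, rfl⟩

lemma pathF_eq_pathNode {f : ℝ → 𝒳} {N k : ℕ} {ξ : ℝ} (hξ : ξ ∈ dyI N k) :
    (Finset.range (N + 1)).image (fun i : ℕ => dyAvg f (i : ℤ) ξ) = pathNode f N k := by
  unfold pathNode
  refine Finset.image_congr fun i hi => ?_
  rw [Finset.mem_coe, Finset.mem_range] at hi
  exact dyAvg_eq_nodeAvg (by omega) hξ

lemma nodeAvg_split {f : ℝ → 𝒳} (hf : IntegrableOn f (Set.Ico (0 : ℝ) 1)) {N k : ℕ}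
    (hk : k < 2 ^ N) :
    nodeAvg f N k = (1 / 2 : ℝ) • (nodeAvg f (N + 1) (2 * k) + nodeAvg f (N + 1) (2 * k + 1)) := by
  have h2k : 2 * k < 2 ^ (N + 1) := by rw [pow_succ]; omega
  have h2k1 : 2 * k + 1 < 2 ^ (N + 1) := by rw [pow_succ]; omega
  have hI : ∫ t in dyI N k, f t =
      (∫ t in dyI (N + 1) (2 * k), f t) + ∫ t in dyI (N + 1) (2 * k + 1), f t := by
    rw [dyI_split N k]
    exact setIntegral_union (dyI_disjoint (by omega)) (dyI_measurableSet _ _)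
      (hf.mono_set (dyI_subset_Ico h2k)) (hf.mono_set (dyI_subset_Ico h2k1))
  unfold nodeAvg
  rw [hI, smul_add, smul_add, smul_smul, smul_smul]
  have hs : (1 / 2 : ℝ) * 2 ^ (N + 1) = 2 ^ N := by rw [pow_succ]; ring
  rw [hs]

lemma pathNode_succ_left (f : ℝ → 𝒳) (N k : ℕ) :
    pathNode f (N + 1) (2 * k) = insert (nodeAvg f (N + 1) (2 * k)) (pathNode f N k) := by
  unfold pathNode
  rw [Finset.range_add_one (n := N + 1), Finset.image_insert]
  congr 1
  · rw [Nat.sub_self, pow_zero, Nat.div_one]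
  · refine Finset.image_congr fun i hi => ?_
    rw [Finset.mem_coe, Finset.mem_range] at hi
    have h1 : N + 1 - i = (N - i) + 1 := by omega
    rw [h1, pow_succ', Nat.mul_div_mul_left k (2 ^ (N - i)) (by norm_num)]

lemma pathNode_succ_right (f : ℝ → 𝒳) (N k : ℕ) :
    pathNode f (N + 1) (2 * k + 1) = insert (nodeAvg f (N + 1) (2 * k + 1)) (pathNode f N k) := by
  unfold pathNode
  rw [Finset.range_add_one (n := N + 1), Finset.image_insert]
  congr 1
  · rw [Nat.sub_self, pow_zero, Nat.div_one]
  · refine Finset.image_congr fun i hi => ?_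
    rw [Finset.mem_coe, Finset.mem_range] at hi
    have h1 : N + 1 - i = (N - i) + 1 := by omega
    have h2 : (2 * k + 1) / 2 = k := by omega
    rw [h1, pow_succ', ← Nat.div_div_eq_div_mul, h2]

lemma pathNode_zero (f : ℝ → 𝒳) : pathNode f 0 0 = {nodeAvg f 0 0} := by
  unfold pathNode
  simp

lemma sum_range_double {M : Type*} [AddCommMonoid M] (n : ℕ) (g : ℕ → M) :
    ∑ j ∈ Finset.range (2 * n), g j = ∑ k ∈ Finset.range n, (g (2 * k) + g (2 * k + 1)) := by
  induction n with
  | zero => simp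
  | succ n ih =>
    have h : 2 * (n + 1) = (2 * n + 1) + 1 := by omega
    rw [h, Finset.sum_range_succ, Finset.sum_range_succ, ih, Finset.sum_range_succ, add_assoc]


end Aux

section Aux
variable {𝒳 : Type*} [NormedAddCommGroup 𝒳] [NormedSpace ℝ 𝒳] [CompleteSpace 𝒳]
  [DecidableEq 𝒳]
lemma jensen_node {f : ℝ → 𝒳}
    (hmeas : AEStronglyMeasurable f (volume.restrict (Set.Ico (0 : ℝ) 1)))
    {p : ℝ} (hp1 : 1 < p) {N k : ℕ} (hk : k < 2 ^ N) :
    ENNReal.ofReal ((2 : ℝ)⁻¹ ^ N) * (‖nodeAvg f N k‖₊ : ℝ≥0∞) ^ p ≤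
      ∫⁻ t in dyI N k, (‖f t‖₊ : ℝ≥0∞) ^ p := by
  have hp0 : (0 : ℝ) < p := by linarith
  set μk := volume.restrict (dyI N k) with hμk
  have hμuniv : μk Set.univ = ENNReal.ofReal ((2 : ℝ)⁻¹ ^ N) := by
    rw [hμk, Measure.restrict_apply_univ, volume_dyI]
  have hmeask : AEStronglyMeasurable f μk :=
    hmeas.mono_measure (Measure.restrict_mono (dyI_subset_Ico hk) le_rfl)
  set L := ∫⁻ t, (‖f t‖₊ : ℝ≥0∞) ^ p ∂μk with hL
  set m := ENNReal.ofReal ((2 : ℝ)⁻¹ ^ N) with hm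
  have hm0 : m ≠ 0 := by
    rw [hm]
    simp only [ne_eq, ENNReal.ofReal_eq_zero, not_le]
    positivity
  have hmtop : m ≠ ⊤ := ENNReal.ofReal_ne_top
  have hA : (‖nodeAvg f N k‖₊ : ℝ≥0∞) ≤
      ENNReal.ofReal ((2 : ℝ) ^ N) * ∫⁻ t, (‖f t‖₊ : ℝ≥0∞) ∂μk := by
    have h0 : ‖nodeAvg f N k‖ ≤
        (2 : ℝ) ^ N * (∫⁻ t, ENNReal.ofReal ‖f t‖ ∂μk).toReal := by
      unfold nodeAvg
      rw [norm_smul, Real.norm_eq_abs, abs_of_pos (by positivity : (0:ℝ) < 2 ^ N)]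
      exact mul_le_mul_of_nonneg_left (norm_integral_le_lintegral_norm f) (by positivity)
    calc (‖nodeAvg f N k‖₊ : ℝ≥0∞) = ENNReal.ofReal ‖nodeAvg f N k‖ :=
          (ofReal_norm_eq_coe_nnnorm _).symm
      _ ≤ ENNReal.ofReal ((2 : ℝ) ^ N * (∫⁻ t, ENNReal.ofReal ‖f t‖ ∂μk).toReal) :=
          ENNReal.ofReal_le_ofReal h0
      _ = ENNReal.ofReal ((2 : ℝ) ^ N) *
            ENNReal.ofReal ((∫⁻ t, ENNReal.ofReal ‖f t‖ ∂μk).toReal) :=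
          ENNReal.ofReal_mul (by positivity)
      _ ≤ ENNReal.ofReal ((2 : ℝ) ^ N) * ∫⁻ t, ENNReal.ofReal ‖f t‖ ∂μk :=
          mul_le_mul_right ENNReal.ofReal_toReal_le _
      _ = ENNReal.ofReal ((2 : ℝ) ^ N) * ∫⁻ t, (‖f t‖₊ : ℝ≥0∞) ∂μk := by
          simp_rw [ofReal_norm_eq_coe_nnnorm]
  have hne0 : (ENNReal.ofReal p) ≠ 0 := by
    simp only [ne_eq, ENNReal.ofReal_eq_zero, not_le]; exact hp0
  have hnetop : (ENNReal.ofReal p) ≠ ⊤ := ENNReal.ofReal_ne_top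
  have hHolder : (∫⁻ t, (‖f t‖₊ : ℝ≥0∞) ∂μk) ≤ L ^ (1 / p) * m ^ (1 - 1 / p) := by
    have h := eLpNorm_le_eLpNorm_mul_rpow_measure_univ (μ := μk) (f := f)
      (p := 1) (q := ENNReal.ofReal p)
      (by rw [ENNReal.one_le_ofReal]; exact hp1.le) hmeask
    rw [eLpNorm_one_eq_lintegral_nnnorm,
      eLpNorm_eq_lintegral_rpow_nnnorm hne0 hnetop, hμuniv,
      ENNReal.toReal_ofReal hp0.le, ENNReal.toReal_one] at h
    simpa using h
  have key : (‖nodeAvg f N k‖₊ : ℝ≥0∞) ^ p ≤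
      ENNReal.ofReal ((2 : ℝ) ^ N) ^ p * (L ^ (1 / p) * m ^ (1 - 1 / p)) ^ p := by
    rw [← ENNReal.mul_rpow_of_nonneg _ _ hp0.le]
    exact ENNReal.rpow_le_rpow (hA.trans (mul_le_mul_right hHolder _)) hp0.le
  have halg : m * (ENNReal.ofReal ((2 : ℝ) ^ N) ^ p * (L ^ (1 / p) * m ^ (1 - 1 / p)) ^ p)
      = L := by
    rw [ENNReal.mul_rpow_of_nonneg _ _ hp0.le, ← ENNReal.rpow_mul, ← ENNReal.rpow_mul,
      one_div_mul_cancel hp0.ne', ENNReal.rpow_one,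
      show (1 - 1 / p) * p = p - 1 by field_simp]
    have hmm : m * m ^ (p - 1) = m ^ p := by
      nth_rewrite 1 [← ENNReal.rpow_one m]
      rw [← ENNReal.rpow_add _ _ hm0 hmtop]
      ring_nf
    have hma : m ^ p * ENNReal.ofReal ((2 : ℝ) ^ N) ^ p = 1 := by
      rw [← ENNReal.mul_rpow_of_nonneg _ _ hp0.le, hm,
        ← ENNReal.ofReal_mul (by positivity), ← mul_pow]
      norm_num
    calc m * (ENNReal.ofReal ((2 : ℝ) ^ N) ^ p * (L * m ^ (p - 1)))
        = (m * m ^ (p - 1)) * ENNReal.ofReal ((2 : ℝ) ^ N) ^ p * L := by ring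
      _ = m ^ p * ENNReal.ofReal ((2 : ℝ) ^ N) ^ p * L := by rw [hmm]
      _ = 1 * L := by rw [hma]
      _ = L := one_mul L
  calc m * (‖nodeAvg f N k‖₊ : ℝ≥0∞) ^ p
      ≤ m * (ENNReal.ofReal ((2 : ℝ) ^ N) ^ p * (L ^ (1 / p) * m ^ (1 - 1 / p)) ^ p) :=
        mul_le_mul_right key m
    _ = L := halg



lemma rmf_of_bellman {p : ℝ} (hp1 : 1 < p) (C : ℝ) (v : Finset 𝒳 → 𝒳 → ℝ)
    (h1 : ∀ (𝒯 : Finset 𝒳) (T : 𝒳), (Rbound (↑𝒯 : Set 𝒳)).toReal ^ p - C * ‖T‖ ^ p ≤ v 𝒯 T)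
    (h2 : ∀ T : 𝒳, v {T} T ≤ 0)
    (h3 : ∀ (𝒯 : Finset 𝒳) (T : 𝒳), v (insert T 𝒯) T = v 𝒯 T)
    (h4 : ∀ 𝒯 (T₁ T₂ : 𝒳), (v 𝒯 T₁ + v 𝒯 T₂) / 2 ≤ v 𝒯 ((1 / 2 : ℝ) • (T₁ + T₂))) :
    ∃ C' : ℝ, 0 ≤ C' ∧ ∀ f : ℝ → 𝒳,
      MemLp f (ENNReal.ofReal p) (volume.restrict (Set.Ico (0 : ℝ) 1)) →
      (∫⁻ ξ in Set.Ico (0 : ℝ) 1, MRdyadic01 f ξ ^ p) ^ (1 / p) ≤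
        ENNReal.ofReal C' *
          eLpNorm f (ENNReal.ofReal p) (volume.restrict (Set.Ico (0 : ℝ) 1)) := by
  have hp0 : (0 : ℝ) < p := by linarith
  set C₀ := max C 0 with hC₀
  refine ⟨C₀ ^ (1 / p), Real.rpow_nonneg (le_max_right C 0) _, ?_⟩
  intro f hf
  haveI : IsFiniteMeasure (volume.restrict (Set.Ico (0 : ℝ) 1)) := ⟨by
    rw [Measure.restrict_apply_univ]
    simp [Real.volume_Ico]⟩
  have hfint : IntegrableOn f (Set.Ico (0 : ℝ) 1) :=
    hf.integrable (by rw [ENNReal.one_le_ofReal]; linarith)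
  set F := ∫⁻ t in Set.Ico (0 : ℝ) 1, (‖f t‖₊ : ℝ≥0∞) ^ p with hF
  have hne0 : (ENNReal.ofReal p) ≠ 0 :=
    fun h => absurd (ENNReal.ofReal_eq_zero.mp h) (by linarith)
  have hnetop : (ENNReal.ofReal p) ≠ ⊤ := ENNReal.ofReal_ne_top
  have heLp : eLpNorm f (ENNReal.ofReal p) (volume.restrict (Set.Ico (0 : ℝ) 1)) =
      F ^ (1 / p) := by
    rw [eLpNorm_eq_lintegral_rpow_nnnorm hne0 hnetop, ENNReal.toReal_ofReal hp0.le]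
  have hFtop : F ≠ ⊤ := by
    intro htop
    have h5 := hf.2
    rw [heLp, htop, ENNReal.top_rpow_of_pos (by positivity : (0 : ℝ) < 1 / p)] at h5
    exact absurd h5 (lt_irrefl ⊤)
  set B : ℕ → ℝ := fun N => ∑ k ∈ Finset.range (2 ^ N),
    ((2 : ℝ)⁻¹ ^ N) * v (pathNode f N k) (nodeAvg f N k) with hB
  have hBstep : ∀ N, B (N + 1) ≤ B N := by
    intro N
    have hsplit : B (N + 1) = ∑ k ∈ Finset.range (2 ^ N),
        (((2 : ℝ)⁻¹ ^ (N + 1)) * v (pathNode f N k) (nodeAvg f (N + 1) (2 * k)) +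
         ((2 : ℝ)⁻¹ ^ (N + 1)) * v (pathNode f N k) (nodeAvg f (N + 1) (2 * k + 1))) := by
      simp only [hB]
      rw [show (2 : ℕ) ^ (N + 1) = 2 * 2 ^ N from by rw [pow_succ]; ring, sum_range_double]
      refine Finset.sum_congr rfl fun k _ => ?_
      rw [pathNode_succ_left, pathNode_succ_right, h3, h3]
    rw [hsplit]
    simp only [hB]
    refine Finset.sum_le_sum fun k hk => ?_
    rw [Finset.mem_range] at hk
    have hcomb : ((2 : ℝ)⁻¹ ^ (N + 1)) * v (pathNode f N k) (nodeAvg f (N + 1) (2 * k)) +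
        ((2 : ℝ)⁻¹ ^ (N + 1)) * v (pathNode f N k) (nodeAvg f (N + 1) (2 * k + 1)) =
        ((2 : ℝ)⁻¹ ^ N) * ((v (pathNode f N k) (nodeAvg f (N + 1) (2 * k)) +
          v (pathNode f N k) (nodeAvg f (N + 1) (2 * k + 1))) / 2) := by
      rw [pow_succ]; ring
    rw [hcomb]
    refine mul_le_mul_of_nonneg_left ?_ (by positivity)
    rw [nodeAvg_split hfint hk]
    exact h4 _ _ _
  have hBle : ∀ N, B N ≤ 0 := by
    intro N
    induction N with
    | zero =>
      simp only [hB, pow_zero, Finset.range_one, Finset.sum_singleton, inv_one, one_mul,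
        pathNode_zero]
      exact h2 (nodeAvg f 0 0)
    | succ n ih => exact le_trans (hBstep n) ih
  have hTn : ∀ N, ∑ k ∈ Finset.range (2 ^ N), ((2 : ℝ)⁻¹ ^ N) * ‖nodeAvg f N k‖ ^ p
      ≤ F.toReal := by
    intro N
    have hsum : ENNReal.ofReal (∑ k ∈ Finset.range (2 ^ N),
        ((2 : ℝ)⁻¹ ^ N) * ‖nodeAvg f N k‖ ^ p) ≤ F := by
      rw [ENNReal.ofReal_sum_of_nonneg (fun k _ =>
        mul_nonneg (by positivity) (Real.rpow_nonneg (norm_nonneg _) p))]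
      rw [hF, lintegral_Ico_eq_sum_dyI N]
      refine Finset.sum_le_sum fun k hk => ?_
      rw [Finset.mem_range] at hk
      refine le_trans (le_of_eq ?_) (jensen_node hf.1 hp1 hk)
      rw [ENNReal.ofReal_mul (by positivity)]
      congr 1
      rw [← ofReal_norm_eq_coe_nnnorm, ENNReal.ofReal_rpow_of_nonneg (norm_nonneg _) hp0.le]
    have h6 := ENNReal.toReal_mono hFtop hsum
    rwa [ENNReal.toReal_ofReal (Finset.sum_nonneg fun k _ =>
      mul_nonneg (by positivity) (Real.rpow_nonneg (norm_nonneg _) p))] at h6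
  have hmain : ∀ N, ∑ k ∈ Finset.range (2 ^ N),
      ((2 : ℝ)⁻¹ ^ N) * (Rbound (↑(pathNode f N k) : Set 𝒳)).toReal ^ p ≤ C₀ * F.toReal := by
    intro N
    set S := ∑ k ∈ Finset.range (2 ^ N), ((2 : ℝ)⁻¹ ^ N) * ‖nodeAvg f N k‖ ^ p with hS
    have hle1 : ∑ k ∈ Finset.range (2 ^ N),
        ((2 : ℝ)⁻¹ ^ N) * (Rbound (↑(pathNode f N k) : Set 𝒳)).toReal ^ p ≤
        C * S + B N := by
      have hauxk : ∀ k ∈ Finset.range (2 ^ N),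
          ((2 : ℝ)⁻¹ ^ N) * (Rbound (↑(pathNode f N k) : Set 𝒳)).toReal ^ p ≤
          C * (((2 : ℝ)⁻¹ ^ N) * ‖nodeAvg f N k‖ ^ p) +
            ((2 : ℝ)⁻¹ ^ N) * v (pathNode f N k) (nodeAvg f N k) := by
        intro k _
        have := h1 (pathNode f N k) (nodeAvg f N k)
        have hw : (0 : ℝ) ≤ (2 : ℝ)⁻¹ ^ N := by positivity
        nlinarith [mul_le_mul_of_nonneg_left
          (show (Rbound (↑(pathNode f N k) : Set 𝒳)).toReal ^ p ≤
            C * ‖nodeAvg f N k‖ ^ p + v (pathNode f N k) (nodeAvg f N k) by linarith) hw]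
      calc ∑ k ∈ Finset.range (2 ^ N),
            ((2 : ℝ)⁻¹ ^ N) * (Rbound (↑(pathNode f N k) : Set 𝒳)).toReal ^ p
          ≤ ∑ k ∈ Finset.range (2 ^ N),
            (C * (((2 : ℝ)⁻¹ ^ N) * ‖nodeAvg f N k‖ ^ p) +
              ((2 : ℝ)⁻¹ ^ N) * v (pathNode f N k) (nodeAvg f N k)) :=
            Finset.sum_le_sum hauxk
        _ = C * S + B N := by
            rw [Finset.sum_add_distrib, ← Finset.mul_sum, hS, hB]
    have hSnn : 0 ≤ S := Finset.sum_nonneg fun k _ =>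
      mul_nonneg (by positivity) (Real.rpow_nonneg (norm_nonneg _) p)
    have hCS : C * S ≤ C₀ * F.toReal :=
      le_trans (mul_le_mul_of_nonneg_right (le_max_left C 0) hSnn)
        (mul_le_mul_of_nonneg_left (hTn N) (le_max_right C 0))
    linarith [hBle N]
  set g : ℕ → ℝ → ℝ≥0∞ := fun N ξ =>
    Rbound (↑((Finset.range (N + 1)).image fun i : ℕ => dyAvg f (i : ℤ) ξ) : Set 𝒳) ^ p
    with hg
  have hMR : ∀ ξ, MRdyadic01 f ξ ^ p = ⨆ N, g N ξ := by
    intro ξ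
    rw [MRdyadic01_eq_iSup, ENNReal_iSup_rpow hp0]
  have hgconst : ∀ N k, k < 2 ^ N → ∀ ξ ∈ dyI N k,
      g N ξ = Rbound (↑(pathNode f N k) : Set 𝒳) ^ p := by
    intro N k hk ξ hξ
    simp only [hg]
    rw [pathF_eq_pathNode hξ]
  have hgmeas : ∀ N, AEMeasurable (g N) (volume.restrict (Set.Ico (0 : ℝ) 1)) := by
    intro N
    set s : ℝ → ℝ≥0∞ := fun ξ => ∑ k ∈ Finset.range (2 ^ N),
      (dyI N k).indicator (fun _ => Rbound (↑(pathNode f N k) : Set 𝒳) ^ p) ξ with hs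
    have hsmeas : Measurable s := by
      apply Finset.measurable_sum
      intro k _
      exact measurable_const.indicator (dyI_measurableSet N k)
    refine hsmeas.aemeasurable.congr ?_
    rw [Filter.EventuallyEq, ae_restrict_iff' measurableSet_Ico]
    refine ae_of_all _ fun ξ hξ => ?_
    obtain ⟨k, hk, hmem⟩ := exists_mem_dyI (N := N) hξ
    have hsv : s ξ = Rbound (↑(pathNode f N k) : Set 𝒳) ^ p := by
      simp only [hs]
      rw [Finset.sum_eq_single k]
      · rw [Set.indicator_of_mem hmem]
      · intro b _ hb
        exact Set.indicator_of_notMem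
          (fun hmem' => (Set.disjoint_left.mp (dyI_disjoint hb) hmem') hmem) _
      · intro hk'; exact absurd (Finset.mem_range.mpr hk) hk'
    rw [hsv, hgconst N k hk ξ hmem]
  have hgmono : ∀ ξ, Monotone fun N => g N ξ := by
    intro ξ M N hMN
    simp only [hg]
    refine ENNReal.rpow_le_rpow (Rbound_mono ?_) hp0.le
    rw [Finset.coe_image, Finset.coe_image]
    exact Set.image_mono (by exact_mod_cast Finset.range_subset_range.mpr (by omega))
  have hlint : ∫⁻ ξ in Set.Ico (0 : ℝ) 1, MRdyadic01 f ξ ^ p =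
      ⨆ N, ∫⁻ ξ in Set.Ico (0 : ℝ) 1, g N ξ :=
    (lintegral_congr hMR).trans (lintegral_iSup' hgmeas (ae_of_all _ hgmono))
  have hlevel : ∀ N, ∫⁻ ξ in Set.Ico (0 : ℝ) 1, g N ξ ≤ ENNReal.ofReal (C₀ * F.toReal) := by
    intro N
    rw [lintegral_Ico_eq_sum_dyI N]
    have hcalc : ∀ k ∈ Finset.range (2 ^ N), ∫⁻ ξ in dyI N k, g N ξ =
        ENNReal.ofReal (((2 : ℝ)⁻¹ ^ N) *
          (Rbound (↑(pathNode f N k) : Set 𝒳)).toReal ^ p) := by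
      intro k hk
      rw [Finset.mem_range] at hk
      rw [setLIntegral_dyI_const' (hgconst N k hk)]
      rw [ENNReal.ofReal_mul (by positivity), mul_comm]
      congr 1
      rw [← ENNReal.ofReal_rpow_of_nonneg ENNReal.toReal_nonneg hp0.le,
        ENNReal.ofReal_toReal (Rbound_coe_ne_top _)]
    rw [Finset.sum_congr rfl hcalc, ← ENNReal.ofReal_sum_of_nonneg (fun k _ =>
      mul_nonneg (by positivity) (Real.rpow_nonneg ENNReal.toReal_nonneg p))]
    exact ENNReal.ofReal_le_ofReal (hmain N)
  have hfinal : ∫⁻ ξ in Set.Ico (0 : ℝ) 1, MRdyadic01 f ξ ^ p ≤ ENNReal.ofReal C₀ * F := by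
    rw [hlint]
    refine iSup_le fun N => le_trans (hlevel N) ?_
    rw [ENNReal.ofReal_mul (le_max_right C 0)]
    exact mul_le_mul_right ENNReal.ofReal_toReal_le _
  calc (∫⁻ ξ in Set.Ico (0 : ℝ) 1, MRdyadic01 f ξ ^ p) ^ (1 / p)
      ≤ (ENNReal.ofReal C₀ * F) ^ (1 / p) := ENNReal.rpow_le_rpow hfinal (by positivity)
    _ = ENNReal.ofReal C₀ ^ (1 / p) * F ^ (1 / p) :=
        ENNReal.mul_rpow_of_nonneg _ _ (by positivity)
    _ = ENNReal.ofReal (C₀ ^ (1 / p)) *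
        eLpNorm f (ENNReal.ofReal p) (volume.restrict (Set.Ico (0 : ℝ) 1)) := by
        rw [heLp, ENNReal.ofReal_rpow_of_nonneg (le_max_right C 0) (by positivity)]


end Aux

section Aux
variable {𝒳 : Type*} [NormedAddCommGroup 𝒳] [NormedSpace ℝ 𝒳] [CompleteSpace 𝒳]
  [DecidableEq 𝒳]
/-- Combinatorial node value of the dyadic martingale with leaves `a` at depth `N`. -/
def Tc (N : ℕ) (a : ℕ → 𝒳) (i k : ℕ) : 𝒳 :=
  ((2 : ℝ) ^ (N - i))⁻¹ • ∑ r ∈ Finset.range (2 ^ (N - i)), a (k * 2 ^ (N - i) + r)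

/-- Combinatorial path set (set of node values above leaf `k`). -/
def Pc (N : ℕ) (a : ℕ → 𝒳) (k : ℕ) : Finset 𝒳 :=
  (Finset.range (N + 1)).image fun i => Tc N a i (k / 2 ^ (N - i))

/-- The step function with value `a k` on `dyI N k`. -/
def stepFn (N : ℕ) (a : ℕ → 𝒳) : ℝ → 𝒳 :=
  fun t => ∑ k ∈ Finset.range (2 ^ N), (dyI N k).indicator (fun _ => a k) t

lemma Tc_leaf (N : ℕ) (a : ℕ → 𝒳) (k : ℕ) : Tc N a N k = a k := by
  unfold Tc
  rw [Nat.sub_self, pow_zero]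
  simp

lemma Tc_root (N : ℕ) (a : ℕ → 𝒳) :
    Tc N a 0 0 = ((2 : ℝ) ^ N)⁻¹ • ∑ r ∈ Finset.range (2 ^ N), a r := by
  unfold Tc
  rw [Nat.sub_zero]
  simp

lemma root_mem_Pc (N : ℕ) (a : ℕ → 𝒳) {k : ℕ} (hk : k < 2 ^ N) : Tc N a 0 0 ∈ Pc N a k := by
  unfold Pc
  refine Finset.mem_image.mpr ⟨0, Finset.mem_range.mpr (by omega), ?_⟩
  rw [Nat.sub_zero, Nat.div_eq_of_lt hk]

lemma stepFn_eq {N k : ℕ} (a : ℕ → 𝒳) (hk : k < 2 ^ N) {t : ℝ} (ht : t ∈ dyI N k) :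
    stepFn N a t = a k := by
  unfold stepFn
  rw [Finset.sum_eq_single k]
  · rw [Set.indicator_of_mem ht]
  · intro b _ hb
    exact Set.indicator_of_notMem
      (fun hmem' => (Set.disjoint_left.mp (dyI_disjoint hb) hmem') ht) _
  · intro hk'; exact absurd (Finset.mem_range.mpr hk) hk'

lemma memℒp_stepFn (N : ℕ) (a : ℕ → 𝒳) (q : ℝ≥0∞) :
    MemLp (stepFn N a) q (volume.restrict (Set.Ico (0 : ℝ) 1)) := by
  haveI : IsFiniteMeasure (volume.restrict (Set.Ico (0 : ℝ) 1)) := ⟨by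
    rw [Measure.restrict_apply_univ]
    simp [Real.volume_Ico]⟩
  unfold stepFn
  apply memLp_finset_sum
  intro k _
  exact memLp_indicator_const q (dyI_measurableSet N k) (a k)
    (Or.inr (measure_ne_top _ _))

lemma div_pow_lt {N i k : ℕ} (hk : k < 2 ^ N) (hi : i ≤ N) : k / 2 ^ (N - i) < 2 ^ i := by
  have h2N : 2 ^ N = 2 ^ (N - i) * 2 ^ i := by rw [← pow_add]; congr 1; omega
  have h2N' : 2 ^ (N - i) * 2 ^ i = 2 ^ i * 2 ^ (N - i) := Nat.mul_comm _ _
  rw [Nat.div_lt_iff_lt_mul (Nat.two_pow_pos _)]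
  omega

lemma dyI_inter_dyI {i N m k : ℕ} (hi : i ≤ N) :
    dyI i m ∩ dyI N k = if k / 2 ^ (N - i) = m then dyI N k else ∅ := by
  split
  · next h =>
    exact Set.inter_eq_right.mpr (h ▸ dyI_subset_ancestor hi)
  · next h =>
    have hd : Disjoint (dyI i m) (dyI N k) :=
      Disjoint.mono_right (dyI_subset_ancestor hi) (dyI_disjoint fun he => h he.symm)
    exact Set.disjoint_iff_inter_eq_empty.mp hd

lemma nodeAvg_stepFn {N i m : ℕ} (a : ℕ → 𝒳) (hi : i ≤ N) (hm : m < 2 ^ i) :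
    nodeAvg (stepFn N a) i m = Tc N a i m := by
  unfold nodeAvg stepFn
  have hint : ∀ k ∈ Finset.range (2 ^ N), Integrable
      (fun t => (dyI N k).indicator (fun _ => a k) t) (volume.restrict (dyI i m)) := by
    intro k _
    exact (integrableOn_const (C := a k)
      (by rw [volume_dyI]; exact ENNReal.ofReal_ne_top)).indicator
      (dyI_measurableSet N k)
  rw [integral_finset_sum _ hint]
  have hterm : ∀ k ∈ Finset.range (2 ^ N),
      (∫ t in dyI i m, (dyI N k).indicator (fun _ => a k) t) =
        if k / 2 ^ (N - i) = m then ((2 : ℝ)⁻¹ ^ N) • a k else 0 := by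
    intro k _
    rw [setIntegral_indicator (dyI_measurableSet N k), dyI_inter_dyI hi]
    split
    · rw [setIntegral_const, measureReal_def, volume_dyI, ENNReal.toReal_ofReal (by positivity)]
    · simp
  rw [Finset.sum_congr rfl hterm, ← Finset.sum_filter]
  have hfilter : (Finset.range (2 ^ N)).filter (fun k => k / 2 ^ (N - i) = m) =
      (Finset.range (2 ^ (N - i))).image (fun r => m * 2 ^ (N - i) + r) := by
    ext k
    simp only [Finset.mem_filter, Finset.mem_range, Finset.mem_image]
    constructor
    · rintro ⟨hk, hdiv⟩
      refine ⟨k % 2 ^ (N - i), Nat.mod_lt k (Nat.two_pow_pos _), ?_⟩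
      have hd := Nat.div_add_mod k (2 ^ (N - i))
      have hd2 : 2 ^ (N - i) * (k / 2 ^ (N - i)) = 2 ^ (N - i) * m := by rw [hdiv]
      have hd3 : 2 ^ (N - i) * m = m * 2 ^ (N - i) := by ring
      omega
    · rintro ⟨r, hr, rfl⟩
      have h2N : 2 ^ N = 2 ^ i * 2 ^ (N - i) := by rw [← pow_add]; congr 1; omega
      have hmul : (m + 1) * 2 ^ (N - i) = m * 2 ^ (N - i) + 2 ^ (N - i) := by ring
      have hmul2 : (m + 1) * 2 ^ (N - i) ≤ 2 ^ i * 2 ^ (N - i) :=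
        Nat.mul_le_mul_right _ (by omega)
      constructor
      · omega
      · have hcomm : m * 2 ^ (N - i) + r = r + 2 ^ (N - i) * m := by ring
        rw [hcomm, Nat.add_mul_div_left _ _ (Nat.two_pow_pos _), Nat.div_eq_of_lt hr]
        omega
  have hinj : ∀ x ∈ Finset.range (2 ^ (N - i)), ∀ y ∈ Finset.range (2 ^ (N - i)),
      m * 2 ^ (N - i) + x = m * 2 ^ (N - i) + y → x = y := by intro x _ y _ h; omega
  rw [hfilter]
  rw [Finset.sum_image hinj]
  rw [← Finset.smul_sum]
  rw [smul_smul]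
  unfold Tc
  congr 1
  have hN2 : (2 : ℝ) ^ N = 2 ^ i * 2 ^ (N - i) := by rw [← pow_add]; congr 1; omega
  rw [inv_pow, hN2]
  have h1 : ((2 : ℝ) ^ i) ≠ 0 := by positivity
  have h2 : ((2 : ℝ) ^ (N - i)) ≠ 0 := by positivity
  field_simp

lemma dyAvg_stepFn_deep {N k j : ℕ} (a : ℕ → 𝒳) (hk : k < 2 ^ N) (hj : N ≤ j)
    {ξ : ℝ} (hξ : ξ ∈ dyI N k) :
    dyAvg (stepFn N a) (j : ℤ) ξ = a k := by
  obtain ⟨m, hm, hmem⟩ := exists_mem_dyI (N := j) (dyI_subset_Ico hk hξ)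
  have heq1 : dyAvg (stepFn N a) (j : ℤ) ξ = nodeAvg (stepFn N a) j m := by
    have h := dyAvg_eq_nodeAvg (f := stepFn N a) (le_refl j) hmem
    rwa [Nat.sub_self, pow_zero, Nat.div_one] at h
  have hanc : m / 2 ^ (j - N) = k := by
    have h1 := mem_dyI_floor (dyI_subset_ancestor hj hmem)
    have h2 := mem_dyI_floor hξ
    omega
  have hsub : dyI j m ⊆ dyI N k := by
    have h := dyI_subset_ancestor (N := j) (i := N) (k := m) hj
    rwa [hanc] at h
  rw [heq1]
  unfold nodeAvg
  rw [setIntegral_congr_fun (dyI_measurableSet j m)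
    (fun t ht => stepFn_eq a hk (hsub ht)), setIntegral_const, measureReal_def, volume_dyI,
    ENNReal.toReal_ofReal (by positivity), smul_smul]
  have h1 : (2 : ℝ) ^ j * (2 : ℝ)⁻¹ ^ j = 1 := by rw [← mul_pow]; norm_num
  rw [h1, one_smul]

lemma pathNode_stepFn {N k : ℕ} (a : ℕ → 𝒳) (hk : k < 2 ^ N) :
    pathNode (stepFn N a) N k = Pc N a k := by
  unfold pathNode Pc
  refine Finset.image_congr fun i hi => ?_
  rw [Finset.mem_coe, Finset.mem_range] at hi
  exact nodeAvg_stepFn a (by omega) (div_pow_lt hk (by omega))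

lemma MRset_stepFn {N k : ℕ} (a : ℕ → 𝒳) (hk : k < 2 ^ N) {ξ : ℝ} (hξ : ξ ∈ dyI N k) :
    {y : 𝒳 | ∃ j : ℕ, y = dyAvg (stepFn N a) (j : ℤ) ξ} = (↑(Pc N a k) : Set 𝒳) := by
  ext y
  simp only [Set.mem_setOf_eq, Finset.mem_coe]
  constructor
  · rintro ⟨j, rfl⟩
    by_cases hj : j ≤ N
    · rw [dyAvg_eq_nodeAvg hj hξ, nodeAvg_stepFn a hj (div_pow_lt hk hj)]
      exact Finset.mem_image.mpr ⟨j, Finset.mem_range.mpr (by omega), rfl⟩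
    · rw [dyAvg_stepFn_deep a hk (by omega) hξ]
      refine Finset.mem_image.mpr ⟨N, Finset.mem_range.mpr (by omega), ?_⟩
      rw [Nat.sub_self, pow_zero, Nat.div_one, Tc_leaf]
  · intro hy
    obtain ⟨i, hi, rfl⟩ := Finset.mem_image.mp hy
    rw [Finset.mem_range] at hi
    exact ⟨i, by rw [dyAvg_eq_nodeAvg (by omega) hξ,
      nodeAvg_stepFn a (by omega) (div_pow_lt hk (by omega))]⟩

lemma MRdyadic01_stepFn {N k : ℕ} (a : ℕ → 𝒳) (hk : k < 2 ^ N) {ξ : ℝ} (hξ : ξ ∈ dyI N k) :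
    MRdyadic01 (stepFn N a) ξ = Rbound (↑(Pc N a k) : Set 𝒳) := by
  unfold MRdyadic01
  rw [MRset_stepFn a hk hξ]


end Aux

section Aux
variable {𝒳 : Type*} [NormedAddCommGroup 𝒳] [NormedSpace ℝ 𝒳] [CompleteSpace 𝒳]
  [DecidableEq 𝒳]
lemma leaf_mem_Pc (N : ℕ) (a : ℕ → 𝒳) (k : ℕ) : a k ∈ Pc N a k := by
  unfold Pc
  refine Finset.mem_image.mpr ⟨N, Finset.mem_range.mpr (by omega), ?_⟩
  rw [Nat.sub_self, pow_zero, Nat.div_one, Tc_leaf]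

lemma real_add_rpow_le {x y q : ℝ} (hx : 0 ≤ x) (hy : 0 ≤ y) (hq : 1 ≤ q) :
    (x + y) ^ q ≤ 2 ^ (q - 1) * (x ^ q + y ^ q) := by
  have h := NNReal.rpow_add_le_mul_rpow_add_rpow x.toNNReal y.toNNReal hq
  rw [← NNReal.coe_le_coe] at h
  push_cast at h
  rwa [Real.coe_toNNReal x hx, Real.coe_toNNReal y hy] at h

lemma Rbound_finset_union_le (F : Finset 𝒳) (S : Set 𝒳) :
    Rbound ((↑F : Set 𝒳) ∪ S) ≤ ENNReal.ofReal (∑ x ∈ F, ‖x‖) + Rbound S := by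
  apply ENNReal.le_of_forall_pos_le_add
  intro ε hε hlt
  have hStop : Rbound S ≠ ⊤ := by
    intro h
    rw [h] at hlt
    simp at hlt
  have h1 : Rbound S < Rbound S + (ε : ℝ≥0∞) :=
    ENNReal.lt_add_right hStop (by exact_mod_cast hε.ne')
  obtain ⟨c, ⟨rS, hrS, rfl⟩, hc⟩ := sInf_lt_iff.mp h1
  calc Rbound ((↑F : Set 𝒳) ∪ S) ≤ ENNReal.ofReal (∑ x ∈ F, ‖x‖ + rS) :=
        Rbound_le_ofReal ((isRBound_finset F).union hrS)
    _ = ENNReal.ofReal (∑ x ∈ F, ‖x‖) + ENNReal.ofReal rS :=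
        ENNReal.ofReal_add (Finset.sum_nonneg fun x _ => norm_nonneg x) hrS.1
    _ ≤ ENNReal.ofReal (∑ x ∈ F, ‖x‖) + (Rbound S + (ε : ℝ≥0∞)) :=
        add_le_add_right hc.le _
    _ = ENNReal.ofReal (∑ x ∈ F, ‖x‖) + Rbound S + (ε : ℝ≥0∞) := (add_assoc _ _ _).symm

/-- `(𝓡(F ∪ G))^p` is controlled by `2^(p-1) ((∑_{F} ‖x‖)^p + 𝓡(G)^p)` for finsets. -/
lemma rb_union_rpow_le {ppow : ℝ} (hp1 : 1 ≤ ppow) (F G : Finset 𝒳) :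
    (Rbound (↑(F ∪ G) : Set 𝒳)).toReal ^ ppow ≤
      2 ^ (ppow - 1) * ((∑ x ∈ F, ‖x‖) ^ ppow + (Rbound (↑G : Set 𝒳)).toReal ^ ppow) := by
  have h1 : (Rbound (↑(F ∪ G) : Set 𝒳)).toReal ≤
      (∑ x ∈ F, ‖x‖) + (Rbound (↑G : Set 𝒳)).toReal := by
    have h2 : Rbound (↑(F ∪ G) : Set 𝒳) ≤
        ENNReal.ofReal (∑ x ∈ F, ‖x‖) + Rbound (↑G : Set 𝒳) := by
      rw [Finset.coe_union]
      exact Rbound_finset_union_le F _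
    have h3 : (ENNReal.ofReal (∑ x ∈ F, ‖x‖) + Rbound (↑G : Set 𝒳)) ≠ ⊤ :=
      ENNReal.add_ne_top.mpr ⟨ENNReal.ofReal_ne_top, Rbound_coe_ne_top G⟩
    have h4 := ENNReal.toReal_mono h3 h2
    rwa [ENNReal.toReal_add ENNReal.ofReal_ne_top (Rbound_coe_ne_top G),
      ENNReal.toReal_ofReal (Finset.sum_nonneg fun x _ => norm_nonneg x)] at h4
  calc (Rbound (↑(F ∪ G) : Set 𝒳)).toReal ^ ppow
      ≤ ((∑ x ∈ F, ‖x‖) + (Rbound (↑G : Set 𝒳)).toReal) ^ ppow :=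
        Real.rpow_le_rpow ENNReal.toReal_nonneg h1 (by linarith)
    _ ≤ 2 ^ (ppow - 1) * ((∑ x ∈ F, ‖x‖) ^ ppow + (Rbound (↑G : Set 𝒳)).toReal ^ ppow) :=
        real_add_rpow_le (Finset.sum_nonneg fun x _ => norm_nonneg x)
          ENNReal.toReal_nonneg hp1

lemma sum_weights (N : ℕ) : ∑ _k ∈ Finset.range (2 ^ N), ((2 : ℝ)⁻¹ ^ N) = 1 := by
  rw [Finset.sum_const, Finset.card_range, nsmul_eq_mul]
  push_cast
  rw [← mul_pow]
  norm_num

lemma tree_inequality {p : ℝ} (hp1 : 1 < p) {CL : ℝ} (hCL : 0 ≤ CL)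
    (hRMF : ∀ f : ℝ → 𝒳,
      MemLp f (ENNReal.ofReal p) (volume.restrict (Set.Ico (0 : ℝ) 1)) →
      (∫⁻ ξ in Set.Ico (0 : ℝ) 1, MRdyadic01 f ξ ^ p) ^ (1 / p) ≤
        ENNReal.ofReal CL *
          eLpNorm f (ENNReal.ofReal p) (volume.restrict (Set.Ico (0 : ℝ) 1)))
    (N : ℕ) (a : ℕ → 𝒳) :
    ∑ k ∈ Finset.range (2 ^ N), ((2 : ℝ)⁻¹ ^ N) *
        (Rbound (↑(Pc N a k) : Set 𝒳)).toReal ^ p ≤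
      CL ^ p * ∑ k ∈ Finset.range (2 ^ N), ((2 : ℝ)⁻¹ ^ N) * ‖a k‖ ^ p := by
  have hp0 : (0 : ℝ) < p := by linarith
  have h := hRMF (stepFn N a) (memℒp_stepFn N a _)
  have hXnn : (0:ℝ) ≤ ∑ k ∈ Finset.range (2 ^ N), ((2 : ℝ)⁻¹ ^ N) *
      (Rbound (↑(Pc N a k) : Set 𝒳)).toReal ^ p :=
    Finset.sum_nonneg fun k _ => mul_nonneg (by positivity)
      (Real.rpow_nonneg ENNReal.toReal_nonneg _)
  have hYnn : (0:ℝ) ≤ ∑ k ∈ Finset.range (2 ^ N), ((2 : ℝ)⁻¹ ^ N) * ‖a k‖ ^ p :=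
    Finset.sum_nonneg fun k _ => mul_nonneg (by positivity)
      (Real.rpow_nonneg (norm_nonneg _) _)
  have hL : ∫⁻ ξ in Set.Ico (0 : ℝ) 1, MRdyadic01 (stepFn N a) ξ ^ p =
      ENNReal.ofReal (∑ k ∈ Finset.range (2 ^ N), ((2 : ℝ)⁻¹ ^ N) *
        (Rbound (↑(Pc N a k) : Set 𝒳)).toReal ^ p) := by
    rw [lintegral_Ico_eq_sum_dyI N, ENNReal.ofReal_sum_of_nonneg (fun k _ =>
      mul_nonneg (by positivity) (Real.rpow_nonneg ENNReal.toReal_nonneg _))]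
    refine Finset.sum_congr rfl fun k hk => ?_
    rw [Finset.mem_range] at hk
    rw [setLIntegral_dyI_const' (fun ξ hξ => by rw [MRdyadic01_stepFn a hk hξ]),
      ENNReal.ofReal_mul (by positivity), mul_comm]
    congr 1
    rw [← ENNReal.ofReal_rpow_of_nonneg ENNReal.toReal_nonneg hp0.le,
      ENNReal.ofReal_toReal (Rbound_coe_ne_top _)]
  have hne0 : (ENNReal.ofReal p) ≠ 0 :=
    fun hh => absurd (ENNReal.ofReal_eq_zero.mp hh) (by linarith)
  have hR : eLpNorm (stepFn N a) (ENNReal.ofReal p) (volume.restrict (Set.Ico (0 : ℝ) 1)) =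
      (ENNReal.ofReal (∑ k ∈ Finset.range (2 ^ N),
        ((2 : ℝ)⁻¹ ^ N) * ‖a k‖ ^ p)) ^ (1 / p) := by
    rw [eLpNorm_eq_lintegral_rpow_nnnorm hne0 ENNReal.ofReal_ne_top,
      ENNReal.toReal_ofReal hp0.le]
    congr 1
    rw [lintegral_Ico_eq_sum_dyI N, ENNReal.ofReal_sum_of_nonneg (fun k _ =>
      mul_nonneg (by positivity) (Real.rpow_nonneg (norm_nonneg _) _))]
    refine Finset.sum_congr rfl fun k hk => ?_
    rw [Finset.mem_range] at hk
    rw [setLIntegral_dyI_const' (fun ξ hξ => by rw [stepFn_eq a hk hξ]),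
      ENNReal.ofReal_mul (by positivity), mul_comm]
    congr 1
    rw [← ofReal_norm_eq_coe_nnnorm, ENNReal.ofReal_rpow_of_nonneg (norm_nonneg _) hp0.le]
  rw [hL, hR] at h
  have h2 := ENNReal.rpow_le_rpow h hp0.le
  rw [← ENNReal.rpow_mul, one_div, inv_mul_cancel₀ hp0.ne', ENNReal.rpow_one,
    ENNReal.mul_rpow_of_nonneg _ _ hp0.le, ← ENNReal.rpow_mul, inv_mul_cancel₀ hp0.ne',
    ENNReal.rpow_one, ENNReal.ofReal_rpow_of_nonneg hCL hp0.le,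
    ← ENNReal.ofReal_mul (Real.rpow_nonneg hCL p)] at h2
  exact (ENNReal.ofReal_le_ofReal_iff (mul_nonneg (Real.rpow_nonneg hCL p) hYnn)).mp h2


end Aux

section Aux
variable {𝒳 : Type*} [NormedAddCommGroup 𝒳] [NormedSpace ℝ 𝒳] [CompleteSpace 𝒳]
  [DecidableEq 𝒳]
/-- Padding: refine the leaves of a tree one step. -/
def padA (a : ℕ → 𝒳) : ℕ → 𝒳 := fun k => a (k / 2)

lemma Tc_padA (N : ℕ) (a : ℕ → 𝒳) {i : ℕ} (hi : i ≤ N) (k : ℕ) :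
    Tc (N + 1) (padA a) i k = Tc N a i k := by
  unfold Tc padA
  have hsub : N + 1 - i = (N - i) + 1 := by omega
  rw [hsub]
  set s := N - i with hs
  rw [show (2 : ℕ) ^ (s + 1) = 2 * 2 ^ s from by rw [pow_succ]; ring, sum_range_double]
  have hsum : ∑ u ∈ Finset.range (2 ^ s),
      (a ((k * (2 * 2 ^ s) + 2 * u) / 2) + a ((k * (2 * 2 ^ s) + (2 * u + 1)) / 2)) =
      (2 : ℝ) • ∑ u ∈ Finset.range (2 ^ s), a (k * 2 ^ s + u) := by
    rw [Finset.smul_sum]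
    refine Finset.sum_congr rfl fun u _ => ?_
    have e1 : k * (2 * 2 ^ s) + 2 * u = 2 * (k * 2 ^ s + u) := by ring
    have e2 : k * (2 * 2 ^ s) + (2 * u + 1) = 2 * (k * 2 ^ s + u) + 1 := by ring
    have e3 : 2 * (k * 2 ^ s + u) / 2 = k * 2 ^ s + u := by omega
    have e4 : (2 * (k * 2 ^ s + u) + 1) / 2 = k * 2 ^ s + u := by omega
    rw [e1, e2, e3, e4, two_smul]
  rw [hsum, smul_smul]
  congr 1
  rw [pow_succ]
  have h2s : ((2 : ℝ) ^ s) ≠ 0 := by positivity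
  field_simp

lemma root_padA (N : ℕ) (a : ℕ → 𝒳) : Tc (N + 1) (padA a) 0 0 = Tc N a 0 0 :=
  Tc_padA N a (Nat.zero_le N) 0

lemma Pc_padA (N : ℕ) (a : ℕ → 𝒳) (k : ℕ) : Pc (N + 1) (padA a) k = Pc N a (k / 2) := by
  unfold Pc
  rw [Finset.range_add_one (n := N + 1), Finset.image_insert]
  have hins : Tc (N + 1) (padA a) (N + 1) (k / 2 ^ (N + 1 - (N + 1))) = a (k / 2) := by
    rw [Nat.sub_self, pow_zero, Nat.div_one, Tc_leaf]
    rfl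
  have himg : (Finset.range (N + 1)).image
        (fun i => Tc (N + 1) (padA a) i (k / 2 ^ (N + 1 - i))) =
      (Finset.range (N + 1)).image (fun i => Tc N a i (k / 2 / 2 ^ (N - i))) := by
    refine Finset.image_congr fun i hi => ?_
    rw [Finset.mem_coe, Finset.mem_range] at hi
    have h1 : N + 1 - i = (N - i) + 1 := by omega
    have h2 : k / 2 ^ (N + 1 - i) = k / 2 / 2 ^ (N - i) := by
      rw [h1, pow_succ', ← Nat.div_div_eq_div_mul]
    rw [h2, Tc_padA N a (by omega)]
  rw [hins, himg]
  refine Finset.insert_eq_self.mpr ?_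
  refine Finset.mem_image.mpr ⟨N, Finset.mem_range.mpr (by omega), ?_⟩
  rw [Nat.sub_self, pow_zero, Nat.div_one, Tc_leaf]

/-- The value of a tree against the obstacle set `𝒯`. -/
def treeVal (p C : ℝ) (𝒯 : Finset 𝒳) (N : ℕ) (a : ℕ → 𝒳) : ℝ :=
  ∑ k ∈ Finset.range (2 ^ N), ((2 : ℝ)⁻¹ ^ N) *
    ((Rbound (↑(𝒯 ∪ Pc N a k) : Set 𝒳)).toReal ^ p - C * ‖a k‖ ^ p)

def vSet (p C : ℝ) (𝒯 : Finset 𝒳) (T : 𝒳) : Set ℝ :=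
  {x | ∃ (N : ℕ) (a : ℕ → 𝒳), Tc N a 0 0 = T ∧ x = treeVal p C 𝒯 N a}

def vB (p C : ℝ) (𝒯 : Finset 𝒳) (T : 𝒳) : ℝ := sSup (vSet p C 𝒯 T)

lemma treeVal_padA (p C : ℝ) (𝒯 : Finset 𝒳) (N : ℕ) (a : ℕ → 𝒳) :
    treeVal p C 𝒯 (N + 1) (padA a) = treeVal p C 𝒯 N a := by
  unfold treeVal
  rw [show (2 : ℕ) ^ (N + 1) = 2 * 2 ^ N from by rw [pow_succ]; ring, sum_range_double]
  refine Finset.sum_congr rfl fun u hu => ?_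
  have e1 : (2 * u) / 2 = u := by omega
  have e2 : (2 * u + 1) / 2 = u := by omega
  rw [Pc_padA, Pc_padA, e1, e2]
  have e3 : padA a (2 * u) = a u := by show a (2 * u / 2) = a u; rw [e1]
  have e4 : padA a (2 * u + 1) = a u := by show a ((2 * u + 1) / 2) = a u; rw [e2]
  rw [e3, e4, pow_succ]
  ring

lemma pad_to {N M : ℕ} (hNM : N ≤ M) (a : ℕ → 𝒳) :
    ∃ a' : ℕ → 𝒳, Tc M a' 0 0 = Tc N a 0 0 ∧
      ∀ (p C : ℝ) (𝒯 : Finset 𝒳), treeVal p C 𝒯 M a' = treeVal p C 𝒯 N a := by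
  induction M, hNM using Nat.le_induction with
  | base => exact ⟨a, rfl, fun _ _ _ => rfl⟩
  | succ M hNM ih =>
    obtain ⟨a', h1, h2⟩ := ih
    exact ⟨padA a', by rw [root_padA, h1], fun p C 𝒯 => by rw [treeVal_padA, h2]⟩

/-- Gluing two trees of the same depth. -/
def glueA (N : ℕ) (a₁ a₂ : ℕ → 𝒳) : ℕ → 𝒳 :=
  fun k => if k < 2 ^ N then a₁ k else a₂ (k - 2 ^ N)

lemma glue_root (N : ℕ) (a₁ a₂ : ℕ → 𝒳) :
    Tc (N + 1) (glueA N a₁ a₂) 0 0 = (1 / 2 : ℝ) • (Tc N a₁ 0 0 + Tc N a₂ 0 0) := by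
  rw [Tc_root, Tc_root, Tc_root,
    show (2 : ℕ) ^ (N + 1) = 2 ^ N + 2 ^ N from by rw [pow_succ]; ring,
    Finset.sum_range_add]
  have hleft : ∑ i ∈ Finset.range (2 ^ N), glueA N a₁ a₂ i =
      ∑ i ∈ Finset.range (2 ^ N), a₁ i :=
    Finset.sum_congr rfl fun i hi => if_pos (Finset.mem_range.mp hi)
  have hright : ∑ i ∈ Finset.range (2 ^ N), glueA N a₁ a₂ (2 ^ N + i) =
      ∑ i ∈ Finset.range (2 ^ N), a₂ i := by
    refine Finset.sum_congr rfl fun i hi => ?_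
    unfold glueA
    rw [if_neg (by omega), Nat.add_sub_cancel_left]
  rw [hleft, hright, smul_add, smul_add, smul_smul, smul_smul]
  have hsc : ((2 : ℝ) ^ (N + 1))⁻¹ = 1 / 2 * ((2 : ℝ) ^ N)⁻¹ := by
    rw [pow_succ]
    have : ((2 : ℝ) ^ N) ≠ 0 := by positivity
    field_simp
  rw [hsc]

lemma glue_node_left {N i k : ℕ} (a₁ a₂ : ℕ → 𝒳) (hk : k < 2 ^ N) (h1 : 1 ≤ i)
    (h2 : i ≤ N + 1) :
    Tc (N + 1) (glueA N a₁ a₂) i (k / 2 ^ (N + 1 - i)) =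
      Tc N a₁ (i - 1) (k / 2 ^ (N - (i - 1))) := by
  have hsN : N - (i - 1) = N + 1 - i := by omega
  have h2N : 2 ^ N = 2 ^ (N - (N + 1 - i)) * 2 ^ (N + 1 - i) := by
    rw [← pow_add]; congr 1; omega
  have hblock : ∀ r, r < 2 ^ (N + 1 - i) →
      k / 2 ^ (N + 1 - i) * 2 ^ (N + 1 - i) + r < 2 ^ N := by
    intro r hr
    have hmlt : k / 2 ^ (N + 1 - i) < 2 ^ (N - (N + 1 - i)) := by
      rw [Nat.div_lt_iff_lt_mul (Nat.two_pow_pos _)]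
      have hcomm : 2 ^ (N - (N + 1 - i)) * 2 ^ (N + 1 - i) =
          2 ^ (N + 1 - i) * 2 ^ (N - (N + 1 - i)) := by ring
      omega
    have hle := Nat.mul_le_mul_right (2 ^ (N + 1 - i))
      (show k / 2 ^ (N + 1 - i) + 1 ≤ 2 ^ (N - (N + 1 - i)) by omega)
    have hh : (k / 2 ^ (N + 1 - i) + 1) * 2 ^ (N + 1 - i) =
        k / 2 ^ (N + 1 - i) * 2 ^ (N + 1 - i) + 2 ^ (N + 1 - i) := by ring
    omega
  unfold Tc glueA
  rw [hsN]
  exact congrArg _ (Finset.sum_congr rfl fun r hr =>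
    if_pos (hblock r (Finset.mem_range.mp hr)))

lemma glue_node_right {N i k : ℕ} (a₁ a₂ : ℕ → 𝒳) (hk0 : 2 ^ N ≤ k) (h1 : 1 ≤ i)
    (h2 : i ≤ N + 1) :
    Tc (N + 1) (glueA N a₁ a₂) i (k / 2 ^ (N + 1 - i)) =
      Tc N a₂ (i - 1) ((k - 2 ^ N) / 2 ^ (N - (i - 1))) := by
  have hsN : N - (i - 1) = N + 1 - i := by omega
  have hB : 2 ^ (N - (N + 1 - i)) * 2 ^ (N + 1 - i) = 2 ^ N := by
    rw [← pow_add]; congr 1; omega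
  have hB' : 2 ^ (N + 1 - i) * 2 ^ (N - (N + 1 - i)) = 2 ^ N := by
    rw [← pow_add]; congr 1; omega
  have hdivsub : (k - 2 ^ N) / 2 ^ (N + 1 - i) =
      k / 2 ^ (N + 1 - i) - 2 ^ (N - (N + 1 - i)) := by
    rw [← hB']
    exact Nat.sub_mul_div k (2 ^ (N + 1 - i)) (2 ^ (N - (N + 1 - i)))
  have hmge : 2 ^ (N - (N + 1 - i)) ≤ k / 2 ^ (N + 1 - i) := by
    rw [Nat.le_div_iff_mul_le (Nat.two_pow_pos _)]
    omega
  have hsub_mul : (k / 2 ^ (N + 1 - i) - 2 ^ (N - (N + 1 - i))) * 2 ^ (N + 1 - i) =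
      k / 2 ^ (N + 1 - i) * 2 ^ (N + 1 - i) - 2 ^ (N - (N + 1 - i)) * 2 ^ (N + 1 - i) :=
    Nat.sub_mul _ _ _
  have hAB : 2 ^ N ≤ k / 2 ^ (N + 1 - i) * 2 ^ (N + 1 - i) := by
    have := Nat.mul_le_mul_right (2 ^ (N + 1 - i)) hmge
    omega
  unfold Tc glueA
  rw [hsN, hdivsub]
  refine congrArg _ (Finset.sum_congr rfl fun r hr => ?_)
  rw [if_neg (by omega)]
  congr 1
  omega

lemma Pc_glue_left {N k : ℕ} (a₁ a₂ : ℕ → 𝒳) (hk : k < 2 ^ N) :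
    Pc (N + 1) (glueA N a₁ a₂) k = insert (Tc (N + 1) (glueA N a₁ a₂) 0 0) (Pc N a₁ k) := by
  have hlt : k < 2 ^ (N + 1) := by have : (2:ℕ) ^ (N+1) = 2 * 2 ^ N := by rw [pow_succ]; ring
                                   omega
  unfold Pc
  ext y
  simp only [Finset.mem_insert, Finset.mem_image, Finset.mem_range]
  constructor
  · rintro ⟨i, hi, rfl⟩
    rcases Nat.eq_zero_or_pos i with rfl | hpos
    · left
      rw [Nat.sub_zero, Nat.div_eq_of_lt hlt]
    · right
      exact ⟨i - 1, by omega, (glue_node_left a₁ a₂ hk hpos (by omega)).symm⟩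
  · rintro (rfl | ⟨i, hi, rfl⟩)
    · exact ⟨0, by omega, by rw [Nat.sub_zero, Nat.div_eq_of_lt hlt]⟩
    · refine ⟨i + 1, by omega, ?_⟩
      rw [glue_node_left a₁ a₂ hk (by omega) (by omega), Nat.add_sub_cancel]

lemma Pc_glue_right {N k : ℕ} (a₁ a₂ : ℕ → 𝒳) (hk0 : 2 ^ N ≤ k) (hk1 : k < 2 ^ (N + 1)) :
    Pc (N + 1) (glueA N a₁ a₂) k =
      insert (Tc (N + 1) (glueA N a₁ a₂) 0 0) (Pc N a₂ (k - 2 ^ N)) := by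
  unfold Pc
  ext y
  simp only [Finset.mem_insert, Finset.mem_image, Finset.mem_range]
  constructor
  · rintro ⟨i, hi, rfl⟩
    rcases Nat.eq_zero_or_pos i with rfl | hpos
    · left
      rw [Nat.sub_zero, Nat.div_eq_of_lt hk1]
    · right
      exact ⟨i - 1, by omega, (glue_node_right a₁ a₂ hk0 hpos (by omega)).symm⟩
  · rintro (rfl | ⟨i, hi, rfl⟩)
    · exact ⟨0, by omega, by rw [Nat.sub_zero, Nat.div_eq_of_lt hk1]⟩
    · refine ⟨i + 1, by omega, ?_⟩
      rw [glue_node_right a₁ a₂ hk0 (by omega) (by omega), Nat.add_sub_cancel]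


end Aux

section Aux
variable {𝒳 : Type*} [NormedAddCommGroup 𝒳] [NormedSpace ℝ 𝒳] [CompleteSpace 𝒳]
  [DecidableEq 𝒳]
lemma Pc_zero (a : ℕ → 𝒳) : Pc 0 a 0 = {a 0} := by
  unfold Pc
  rw [Finset.range_one, Finset.image_singleton, Nat.sub_self, pow_zero, Nat.div_one, Tc_leaf]

lemma treeVal_zero (p C : ℝ) (𝒯 : Finset 𝒳) (a : ℕ → 𝒳) :
    treeVal p C 𝒯 0 a = (Rbound (↑(𝒯 ∪ {a 0}) : Set 𝒳)).toReal ^ p - C * ‖a 0‖ ^ p := by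
  unfold treeVal
  rw [pow_zero (2 : ℕ), Finset.range_one, Finset.sum_singleton, Pc_zero, pow_zero, one_mul]

lemma treeVal_glue {p C : ℝ} (hp0 : 0 < p) (𝒯 : Finset 𝒳) (N : ℕ) (a₁ a₂ : ℕ → 𝒳) :
    (treeVal p C 𝒯 N a₁ + treeVal p C 𝒯 N a₂) / 2 ≤
      treeVal p C 𝒯 (N + 1) (glueA N a₁ a₂) := by
  have hsplit : treeVal p C 𝒯 (N + 1) (glueA N a₁ a₂) =
      (∑ k ∈ Finset.range (2 ^ N), ((2 : ℝ)⁻¹ ^ (N + 1)) *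
        ((Rbound (↑(𝒯 ∪ Pc (N + 1) (glueA N a₁ a₂) k) : Set 𝒳)).toReal ^ p -
          C * ‖glueA N a₁ a₂ k‖ ^ p)) +
      ∑ i ∈ Finset.range (2 ^ N), ((2 : ℝ)⁻¹ ^ (N + 1)) *
        ((Rbound (↑(𝒯 ∪ Pc (N + 1) (glueA N a₁ a₂) (2 ^ N + i)) : Set 𝒳)).toReal ^ p -
          C * ‖glueA N a₁ a₂ (2 ^ N + i)‖ ^ p) := by
    unfold treeVal
    rw [show (2 : ℕ) ^ (N + 1) = 2 ^ N + 2 ^ N from by rw [pow_succ]; ring,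
      Finset.sum_range_add]
  have h1 : treeVal p C 𝒯 N a₁ / 2 ≤
      ∑ k ∈ Finset.range (2 ^ N), ((2 : ℝ)⁻¹ ^ (N + 1)) *
        ((Rbound (↑(𝒯 ∪ Pc (N + 1) (glueA N a₁ a₂) k) : Set 𝒳)).toReal ^ p -
          C * ‖glueA N a₁ a₂ k‖ ^ p) := by
    unfold treeVal
    rw [Finset.sum_div]
    refine Finset.sum_le_sum fun k hk => ?_
    rw [Finset.mem_range] at hk
    have hg : glueA N a₁ a₂ k = a₁ k := if_pos hk
    rw [hg, Pc_glue_left a₁ a₂ hk]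
    have hsub : 𝒯 ∪ Pc N a₁ k ⊆
        𝒯 ∪ insert (Tc (N + 1) (glueA N a₁ a₂) 0 0) (Pc N a₁ k) :=
      Finset.union_subset_union_right (Finset.subset_insert _ _)
    have hrb : (Rbound (↑(𝒯 ∪ Pc N a₁ k) : Set 𝒳)).toReal ^ p ≤
        (Rbound (↑(𝒯 ∪ insert (Tc (N + 1) (glueA N a₁ a₂) 0 0) (Pc N a₁ k)) : Set 𝒳)).toReal
          ^ p :=
      Real.rpow_le_rpow ENNReal.toReal_nonneg
        (rb_mono (Finset.coe_subset.mpr hsub) (Rbound_coe_ne_top _)) hp0.le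
    have hw : (0 : ℝ) ≤ (2 : ℝ)⁻¹ ^ (N + 1) := by positivity
    calc ((2 : ℝ)⁻¹ ^ N) * ((Rbound (↑(𝒯 ∪ Pc N a₁ k) : Set 𝒳)).toReal ^ p -
            C * ‖a₁ k‖ ^ p) / 2
        = ((2 : ℝ)⁻¹ ^ (N + 1)) * ((Rbound (↑(𝒯 ∪ Pc N a₁ k) : Set 𝒳)).toReal ^ p -
            C * ‖a₁ k‖ ^ p) := by rw [pow_succ]; ring
      _ ≤ _ := mul_le_mul_of_nonneg_left (by linarith) hw
  have h2 : treeVal p C 𝒯 N a₂ / 2 ≤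
      ∑ i ∈ Finset.range (2 ^ N), ((2 : ℝ)⁻¹ ^ (N + 1)) *
        ((Rbound (↑(𝒯 ∪ Pc (N + 1) (glueA N a₁ a₂) (2 ^ N + i)) : Set 𝒳)).toReal ^ p -
          C * ‖glueA N a₁ a₂ (2 ^ N + i)‖ ^ p) := by
    unfold treeVal
    rw [Finset.sum_div]
    refine Finset.sum_le_sum fun i hi => ?_
    rw [Finset.mem_range] at hi
    have hg : glueA N a₁ a₂ (2 ^ N + i) = a₂ i := by
      unfold glueA
      rw [if_neg (by omega), Nat.add_sub_cancel_left]
    have hk1 : 2 ^ N + i < 2 ^ (N + 1) := by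
      have : (2 : ℕ) ^ (N + 1) = 2 * 2 ^ N := by rw [pow_succ]; ring
      omega
    have hPc := Pc_glue_right a₁ a₂ (Nat.le_add_right _ _) hk1
    rw [hg, hPc, Nat.add_sub_cancel_left]
    have hsub : 𝒯 ∪ Pc N a₂ i ⊆
        𝒯 ∪ insert (Tc (N + 1) (glueA N a₁ a₂) 0 0) (Pc N a₂ i) :=
      Finset.union_subset_union_right (Finset.subset_insert _ _)
    have hrb : (Rbound (↑(𝒯 ∪ Pc N a₂ i) : Set 𝒳)).toReal ^ p ≤
        (Rbound (↑(𝒯 ∪ insert (Tc (N + 1) (glueA N a₁ a₂) 0 0) (Pc N a₂ i)) : Set 𝒳)).toReal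
          ^ p :=
      Real.rpow_le_rpow ENNReal.toReal_nonneg
        (rb_mono (Finset.coe_subset.mpr hsub) (Rbound_coe_ne_top _)) hp0.le
    have hw : (0 : ℝ) ≤ (2 : ℝ)⁻¹ ^ (N + 1) := by positivity
    calc ((2 : ℝ)⁻¹ ^ N) * ((Rbound (↑(𝒯 ∪ Pc N a₂ i) : Set 𝒳)).toReal ^ p -
            C * ‖a₂ i‖ ^ p) / 2
        = ((2 : ℝ)⁻¹ ^ (N + 1)) * ((Rbound (↑(𝒯 ∪ Pc N a₂ i) : Set 𝒳)).toReal ^ p -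
            C * ‖a₂ i‖ ^ p) := by rw [pow_succ]; ring
      _ ≤ _ := mul_le_mul_of_nonneg_left (by linarith) hw
  calc (treeVal p C 𝒯 N a₁ + treeVal p C 𝒯 N a₂) / 2
      = treeVal p C 𝒯 N a₁ / 2 + treeVal p C 𝒯 N a₂ / 2 := by ring
    _ ≤ _ := add_le_add h1 h2
    _ = treeVal p C 𝒯 (N + 1) (glueA N a₁ a₂) := hsplit.symm

section Bellman

variable {p CL : ℝ}

/-- Abbreviation for the RMF hypothesis. -/
def RMFhyp (𝒳 : Type*) [NormedAddCommGroup 𝒳] [NormedSpace ℝ 𝒳] [CompleteSpace 𝒳]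
    (p CL : ℝ) : Prop :=
  ∀ f : ℝ → 𝒳, MemLp f (ENNReal.ofReal p) (volume.restrict (Set.Ico (0 : ℝ) 1)) →
    (∫⁻ ξ in Set.Ico (0 : ℝ) 1, MRdyadic01 f ξ ^ p) ^ (1 / p) ≤
      ENNReal.ofReal CL *
        eLpNorm f (ENNReal.ofReal p) (volume.restrict (Set.Ico (0 : ℝ) 1))

lemma treeVal_le_bound (hp1 : 1 < p) (hCL : 0 ≤ CL) (hRMF : RMFhyp 𝒳 p CL) {C : ℝ}
    (hC2 : 2 ^ (p - 1) * CL ^ p ≤ C) (𝒯 : Finset 𝒳) (N : ℕ) (a : ℕ → 𝒳) :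
    treeVal p C 𝒯 N a ≤ 2 ^ (p - 1) * (∑ x ∈ 𝒯, ‖x‖) ^ p := by
  have hp0 : (0 : ℝ) < p := by linarith
  have htwo : (0 : ℝ) ≤ 2 ^ (p - 1) := Real.rpow_nonneg (by norm_num) _
  set Snorm := ∑ x ∈ 𝒯, ‖x‖ with hSn
  have hperk : ∀ k ∈ Finset.range (2 ^ N),
      ((2 : ℝ)⁻¹ ^ N) * ((Rbound (↑(𝒯 ∪ Pc N a k) : Set 𝒳)).toReal ^ p - C * ‖a k‖ ^ p) ≤
      ((2 : ℝ)⁻¹ ^ N) * (2 ^ (p - 1) * Snorm ^ p) +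
        (2 ^ (p - 1) * (((2 : ℝ)⁻¹ ^ N) * (Rbound (↑(Pc N a k) : Set 𝒳)).toReal ^ p) -
          C * (((2 : ℝ)⁻¹ ^ N) * ‖a k‖ ^ p)) := by
    intro k _
    have h := rb_union_rpow_le hp1.le 𝒯 (Pc N a k)
    have hw : (0 : ℝ) ≤ (2 : ℝ)⁻¹ ^ N := by positivity
    nlinarith [mul_le_mul_of_nonneg_left h hw]
  have hsum := Finset.sum_le_sum hperk
  rw [Finset.sum_add_distrib, Finset.sum_sub_distrib,
    ← Finset.mul_sum (Finset.range (2 ^ N)) _ ((2 : ℝ) ^ (p - 1)),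
    ← Finset.mul_sum (Finset.range (2 ^ N)) _ C,
    ← Finset.sum_mul, sum_weights, one_mul] at hsum
  have htree := tree_inequality hp1 hCL hRMF N a
  have hYnn : (0 : ℝ) ≤ ∑ k ∈ Finset.range (2 ^ N), ((2 : ℝ)⁻¹ ^ N) * ‖a k‖ ^ p :=
    Finset.sum_nonneg fun k _ => mul_nonneg (by positivity)
      (Real.rpow_nonneg (norm_nonneg _) _)
  have hfin : 2 ^ (p - 1) * (∑ k ∈ Finset.range (2 ^ N),
        ((2 : ℝ)⁻¹ ^ N) * (Rbound (↑(Pc N a k) : Set 𝒳)).toReal ^ p) -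
      C * (∑ k ∈ Finset.range (2 ^ N), ((2 : ℝ)⁻¹ ^ N) * ‖a k‖ ^ p) ≤ 0 := by
    have h5 : 2 ^ (p - 1) * (∑ k ∈ Finset.range (2 ^ N),
        ((2 : ℝ)⁻¹ ^ N) * (Rbound (↑(Pc N a k) : Set 𝒳)).toReal ^ p) ≤
        2 ^ (p - 1) * (CL ^ p * ∑ k ∈ Finset.range (2 ^ N),
          ((2 : ℝ)⁻¹ ^ N) * ‖a k‖ ^ p) :=
      mul_le_mul_of_nonneg_left htree htwo
    have h6 : (2 ^ (p - 1) * CL ^ p) * (∑ k ∈ Finset.range (2 ^ N),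
        ((2 : ℝ)⁻¹ ^ N) * ‖a k‖ ^ p) ≤ C * (∑ k ∈ Finset.range (2 ^ N),
        ((2 : ℝ)⁻¹ ^ N) * ‖a k‖ ^ p) :=
      mul_le_mul_of_nonneg_right hC2 hYnn
    nlinarith
  unfold treeVal
  linarith

lemma vSet_nonempty (pq C : ℝ) (𝒯 : Finset 𝒳) (T : 𝒳) : (vSet pq C 𝒯 T).Nonempty :=
  ⟨treeVal pq C 𝒯 0 (fun _ => T), 0, fun _ => T, Tc_leaf 0 _ 0, rfl⟩

lemma vSet_bddAbove (hp1 : 1 < p) (hCL : 0 ≤ CL) (hRMF : RMFhyp 𝒳 p CL) {C : ℝ}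
    (hC2 : 2 ^ (p - 1) * CL ^ p ≤ C) (𝒯 : Finset 𝒳) (T : 𝒳) :
    BddAbove (vSet p C 𝒯 T) := by
  refine ⟨2 ^ (p - 1) * (∑ x ∈ 𝒯, ‖x‖) ^ p, ?_⟩
  rintro x ⟨N, a, _, rfl⟩
  exact treeVal_le_bound hp1 hCL hRMF hC2 𝒯 N a

lemma bellman_of_rmf (hp1 : 1 < p) (hCL : 0 ≤ CL) (hRMF : RMFhyp 𝒳 p CL) :
    ∃ (C : ℝ) (v : Finset 𝒳 → 𝒳 → ℝ),
      (∀ (𝒯 : Finset 𝒳) (T : 𝒳),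
        (Rbound (↑𝒯 : Set 𝒳)).toReal ^ p - C * ‖T‖ ^ p ≤ v 𝒯 T) ∧
      (∀ T : 𝒳, v {T} T ≤ 0) ∧
      (∀ (𝒯 : Finset 𝒳) (T : 𝒳), v (insert T 𝒯) T = v 𝒯 T) ∧
      ∀ (𝒯 : Finset 𝒳) (T₁ T₂ : 𝒳),
        (v 𝒯 T₁ + v 𝒯 T₂) / 2 ≤ v 𝒯 ((1 / 2 : ℝ) • (T₁ + T₂)) := by
  have hp0 : (0 : ℝ) < p := by linarith
  set C := 2 ^ (p - 1) * CL ^ p with hC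
  have hC2 : 2 ^ (p - 1) * CL ^ p ≤ C := le_refl _
  have hone : (1 : ℝ) ≤ 2 ^ (p - 1) := by
    calc (1 : ℝ) = (2 : ℝ) ^ (0 : ℝ) := (Real.rpow_zero 2).symm
      _ ≤ 2 ^ (p - 1) := Real.rpow_le_rpow_of_exponent_le (by norm_num) (by linarith)
  have hC3 : CL ^ p ≤ C := by
    rw [hC]
    nlinarith [Real.rpow_nonneg hCL p]
  refine ⟨C, vB p C, ?_, ?_, ?_, ?_⟩
  · -- minorant
    intro 𝒯 T
    have hmem : treeVal p C 𝒯 0 (fun _ => T) ∈ vSet p C 𝒯 T :=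
      ⟨0, fun _ => T, Tc_leaf 0 _ 0, rfl⟩
    have h1 : (Rbound (↑𝒯 : Set 𝒳)).toReal ^ p - C * ‖T‖ ^ p ≤
        treeVal p C 𝒯 0 (fun _ => T) := by
      rw [treeVal_zero]
      have hsub : (↑𝒯 : Set 𝒳) ⊆ ↑(𝒯 ∪ {T}) :=
        Finset.coe_subset.mpr Finset.subset_union_left
      have := Real.rpow_le_rpow ENNReal.toReal_nonneg
        (rb_mono hsub (Rbound_coe_ne_top _)) hp0.le
      linarith
    exact le_trans h1 (le_csSup (vSet_bddAbove hp1 hCL hRMF hC2 𝒯 T) hmem)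
  · -- diagonal
    intro T
    refine Real.sSup_le ?_ le_rfl
    rintro x ⟨N, a, hroot, rfl⟩
    have huni : ∀ k ∈ Finset.range (2 ^ N), ({T} : Finset 𝒳) ∪ Pc N a k = Pc N a k :=
      fun k hk => Finset.union_eq_right.mpr (Finset.singleton_subset_iff.mpr
        (hroot ▸ root_mem_Pc N a (Finset.mem_range.mp hk)))
    have heq : treeVal p C {T} N a = ∑ k ∈ Finset.range (2 ^ N), ((2 : ℝ)⁻¹ ^ N) *
        ((Rbound (↑(Pc N a k) : Set 𝒳)).toReal ^ p - C * ‖a k‖ ^ p) := by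
      unfold treeVal
      exact Finset.sum_congr rfl fun k hk => by rw [huni k hk]
    have htree := tree_inequality hp1 hCL hRMF N a
    have hYnn : (0 : ℝ) ≤ ∑ k ∈ Finset.range (2 ^ N), ((2 : ℝ)⁻¹ ^ N) * ‖a k‖ ^ p :=
      Finset.sum_nonneg fun k _ => mul_nonneg (by positivity)
        (Real.rpow_nonneg (norm_nonneg _) _)
    have heq2 : treeVal p C {T} N a =
        (∑ k ∈ Finset.range (2 ^ N), ((2 : ℝ)⁻¹ ^ N) *
          (Rbound (↑(Pc N a k) : Set 𝒳)).toReal ^ p) -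
        C * ∑ k ∈ Finset.range (2 ^ N), ((2 : ℝ)⁻¹ ^ N) * ‖a k‖ ^ p := by
      calc treeVal p C {T} N a
          = ∑ k ∈ Finset.range (2 ^ N),
              (((2 : ℝ)⁻¹ ^ N) * (Rbound (↑(Pc N a k) : Set 𝒳)).toReal ^ p -
                C * (((2 : ℝ)⁻¹ ^ N) * ‖a k‖ ^ p)) := by
            rw [heq]; exact Finset.sum_congr rfl fun k _ => by ring
        _ = _ := by rw [Finset.sum_sub_distrib, ← Finset.mul_sum (Finset.range (2 ^ N)) _ C]
    rw [heq2]
    have h7 : C * (∑ k ∈ Finset.range (2 ^ N), ((2 : ℝ)⁻¹ ^ N) * ‖a k‖ ^ p) ≥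
        CL ^ p * (∑ k ∈ Finset.range (2 ^ N), ((2 : ℝ)⁻¹ ^ N) * ‖a k‖ ^ p) :=
      mul_le_mul_of_nonneg_right hC3 hYnn
    linarith
  · -- insertion
    intro 𝒯 T
    unfold vB
    congr 1
    unfold vSet
    ext x
    simp only [Set.mem_setOf_eq]
    constructor
    · rintro ⟨N, a, hroot, rfl⟩
      refine ⟨N, a, hroot, ?_⟩
      unfold treeVal
      refine Finset.sum_congr rfl fun k hk => ?_
      have h8 : insert T 𝒯 ∪ Pc N a k = 𝒯 ∪ Pc N a k := by
        rw [Finset.insert_union]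
        exact Finset.insert_eq_self.mpr (Finset.mem_union_right _
          (hroot ▸ root_mem_Pc N a (Finset.mem_range.mp hk)))
      rw [h8]
    · rintro ⟨N, a, hroot, rfl⟩
      refine ⟨N, a, hroot, ?_⟩
      unfold treeVal
      refine Finset.sum_congr rfl fun k hk => ?_
      have h8 : insert T 𝒯 ∪ Pc N a k = 𝒯 ∪ Pc N a k := by
        rw [Finset.insert_union]
        exact Finset.insert_eq_self.mpr (Finset.mem_union_right _
          (hroot ▸ root_mem_Pc N a (Finset.mem_range.mp hk)))
      rw [h8]
  · -- midpoint concavity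
    intro 𝒯 T₁ T₂
    have key : ∀ x₁ ∈ vSet p C 𝒯 T₁, ∀ x₂ ∈ vSet p C 𝒯 T₂,
        (x₁ + x₂) / 2 ≤ vB p C 𝒯 ((1 / 2 : ℝ) • (T₁ + T₂)) := by
      rintro x₁ ⟨N₁, a₁, hr1, rfl⟩ x₂ ⟨N₂, a₂, hr2, rfl⟩
      obtain ⟨a₁', hra1, hva1⟩ := pad_to (le_max_left N₁ N₂) a₁
      obtain ⟨a₂', hra2, hva2⟩ := pad_to (le_max_right N₁ N₂) a₂
      set N := max N₁ N₂ with hN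
      have hmem : treeVal p C 𝒯 (N + 1) (glueA N a₁' a₂') ∈
          vSet p C 𝒯 ((1 / 2 : ℝ) • (T₁ + T₂)) :=
        ⟨N + 1, glueA N a₁' a₂', by rw [glue_root, hra1, hra2, hr1, hr2], rfl⟩
      calc (treeVal p C 𝒯 N₁ a₁ + treeVal p C 𝒯 N₂ a₂) / 2
          = (treeVal p C 𝒯 N a₁' + treeVal p C 𝒯 N a₂') / 2 := by
            rw [hva1 p C 𝒯, hva2 p C 𝒯]
        _ ≤ treeVal p C 𝒯 (N + 1) (glueA N a₁' a₂') := treeVal_glue hp0 𝒯 N a₁' a₂'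
        _ ≤ vB p C 𝒯 ((1 / 2 : ℝ) • (T₁ + T₂)) :=
            le_csSup (vSet_bddAbove hp1 hCL hRMF hC2 𝒯 _) hmem
    have h9 : vB p C 𝒯 T₁ ≤ 2 * vB p C 𝒯 ((1 / 2 : ℝ) • (T₁ + T₂)) - vB p C 𝒯 T₂ := by
      refine csSup_le (vSet_nonempty p C 𝒯 T₁) fun x₁ hx₁ => ?_
      have h10 : vB p C 𝒯 T₂ ≤ 2 * vB p C 𝒯 ((1 / 2 : ℝ) • (T₁ + T₂)) - x₁ := by
        refine csSup_le (vSet_nonempty p C 𝒯 T₂) fun x₂ hx₂ => ?_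
        have := key x₁ hx₁ x₂ hx₂
        linarith
      linarith
    linarith

end Bellman


end Aux

/-- `𝒳` has `RMF_p` w.r.t. the filtration of dyadic intervals on `[0,1)` iff there
are a constant `C` and a function `v` majorizing `𝓡(𝒯)^p − C‖T‖^p`, invariant under
adjoining `T` to `𝒯`, non-positive on the diagonal and midpoint concave in `T`. -/
theorem statement19 {𝒳 : Type*} [NormedAddCommGroup 𝒳] [NormedSpace ℝ 𝒳] [CompleteSpace 𝒳]
    [DecidableEq 𝒳] (p : ℝ) (hp1 : 1 < p) :
    (∃ C : ℝ, 0 ≤ C ∧ ∀ f : ℝ → 𝒳,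
        MemLp f (ENNReal.ofReal p) (volume.restrict (Set.Ico (0 : ℝ) 1)) →
        (∫⁻ ξ in Set.Ico (0 : ℝ) 1, MRdyadic01 f ξ ^ p) ^ (1 / p) ≤
          ENNReal.ofReal C *
            eLpNorm f (ENNReal.ofReal p) (volume.restrict (Set.Ico (0 : ℝ) 1))) ↔
    ∃ (C : ℝ) (v : Finset 𝒳 → 𝒳 → ℝ),
      (∀ (𝒯 : Finset 𝒳) (T : 𝒳),
        (Rbound (↑𝒯 : Set 𝒳)).toReal ^ p - C * ‖T‖ ^ p ≤ v 𝒯 T) ∧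
      (∀ T : 𝒳, v {T} T ≤ 0) ∧
      (∀ (𝒯 : Finset 𝒳) (T : 𝒳), v (insert T 𝒯) T = v 𝒯 T) ∧
      ∀ (𝒯 : Finset 𝒳) (T₁ T₂ : 𝒳),
        (v 𝒯 T₁ + v 𝒯 T₂) / 2 ≤ v 𝒯 ((1 / 2 : ℝ) • (T₁ + T₂)) := by
  constructor
  · rintro ⟨CL, hCL, hRMF⟩
    exact bellman_of_rmf hp1 hCL hRMF
  · rintro ⟨C, v, h1, h2, h3, h4⟩
    exact rmf_of_bellman hp1 C v h1 h2 h3 h4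

end RMF
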